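/- arXiv:2306.14998 — 7 statements merged into one kernel-verified Lean document; each statement's English description precedes it below -/
import Mathlib

section
/- For every r ≥ 1, every n ≥ 2, every ε ∈ (0,1), every measurable estimator θ̂_r : ℕ^n → ℝ, and every measurable function h : ℝ → ℝ, one has sup over all probability mass functions P on ℕ of P_P( ℓ(θ̂_r(X_n), θ_r(P;X_n)) > ε ) = 1. In particular, minimax estimation of the r-order missing mass under the multiplicative loss is infeasible over the class of all discrete distributions. -/
/-!
Let `P_q` put mass `1 - q` on `0` and `q` on `1`. The all-zero sample has probability `(1 - q)^n`;
on it the `r`-order missing mass is `q^r` while the estimate is a fixed number `c`, so the loss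
is `|c / q^r - 1|`. As `q → 0⁺`, `c / q^r` either stays `≤ 0` or tends to `+∞`, so this loss
exceeds `ε < 1` for all small `q`, and the worst-case probability is at least `(1 - q)^n → 1`.
-/

open MeasureTheory ProbabilityTheory Real Filter

noncomputable section

/-- The law of an i.i.d. sample of size `n` from the discrete distribution `P` on `ℕ`. -/
def sampleMeasure (P : PMF ℕ) (n : ℕ) : Measure (Fin n → ℕ) :=
  Measure.pi fun _ => P.toMeasure

/-- The probability mass of symbol `j` under `P`, as a real number. -/
def pReal (P : PMF ℕ) (j : ℕ) : ℝ := (P j).toReal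

/-- Empirical frequency of the symbol `j` in the sample `ω`. -/
def freq {n : ℕ} (ω : Fin n → ℕ) (j : ℕ) : ℕ :=
  (Finset.univ.filter fun i => ω i = j).card

/-- The `r`-order missing mass `θ_r(P; X_n)`. -/
def missingMass (p : ℕ → ℝ) (r : ℕ) {n : ℕ} (ω : Fin n → ℕ) : ℝ :=
  ∑' j, p j ^ r * (if freq ω j = 0 then 1 else 0)

/-- The multiplicative (relative) loss: `ℓ(t, θ) = |t/θ - 1|` if `θ > 0`, and `h t` otherwise. -/
def mloss (h : ℝ → ℝ) (t θ : ℝ) : ℝ := if 0 < θ then |t / θ - 1| else h t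

open Set Topology

def twoPoint (q : ℝ) (hq : q ∈ Icc 0 1) : PMF ℕ :=
  PMF.ofFinset
    (fun j => if j = 0 then ENNReal.ofReal (1 - q) else if j = 1 then ENNReal.ofReal q else 0)
    {0, 1}
    (by
      rw [Finset.sum_pair zero_ne_one, if_pos rfl, if_neg one_ne_zero, if_pos rfl,
        ← ENNReal.ofReal_add (by linarith [hq.2]) hq.1, sub_add_cancel, ENNReal.ofReal_one])
    (fun j hj => by
      simp only [Finset.mem_insert, Finset.mem_singleton, not_or] at hj
      simp [hj.1, hj.2])

section twoPoint

variable {q : ℝ} (hq : q ∈ Icc 0 1)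

lemma twoPoint_apply_zero : twoPoint q hq 0 = ENNReal.ofReal (1 - q) := by
  simp [twoPoint]

lemma pReal_twoPoint_one : pReal (twoPoint q hq) 1 = q := by
  simp [pReal, twoPoint, hq.1]

lemma twoPoint_apply_of_two_le {j : ℕ} (hj : 2 ≤ j) : twoPoint q hq j = 0 := by
  simp [twoPoint, show j ≠ 0 by omega, show j ≠ 1 by omega]

end twoPoint

lemma sampleMeasure_const (P : PMF ℕ) (n a : ℕ) :
    sampleMeasure P n {fun _ => a} = P a ^ n := by
  simp [sampleMeasure, PMF.toMeasure_apply_singleton]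

instance isProbabilityMeasure_sampleMeasure (P : PMF ℕ) (n : ℕ) :
    IsProbabilityMeasure (sampleMeasure P n) := by
  unfold sampleMeasure; infer_instance

lemma freq_const_self (n a : ℕ) : freq (fun _ : Fin n => a) a = n := by
  simp [freq]

lemma freq_const_of_ne {n a j : ℕ} (hj : j ≠ a) : freq (fun _ : Fin n => a) j = 0 := by
  simp [freq, Ne.symm hj]

lemma missingMass_eq_sum_of_support {p : ℕ → ℝ} {r n : ℕ} (hr : r ≠ 0) {s : Finset ℕ}
    (hp : ∀ j ∉ s, p j = 0) (ω : Fin n → ℕ) :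
    missingMass p r ω = ∑ j ∈ s, p j ^ r * if freq ω j = 0 then 1 else 0 :=
  tsum_eq_sum fun j hj => by simp [hp j hj, hr]

lemma missingMass_twoPoint_const_zero {r n : ℕ} (hr : r ≠ 0) (hn : n ≠ 0) {q : ℝ}
    (hq : q ∈ Icc 0 1) :
    missingMass (pReal (twoPoint q hq)) r (fun _ : Fin n => 0) = q ^ r := by
  have hsupp : ∀ j ∉ ({0, 1} : Finset ℕ), pReal (twoPoint q hq) j = 0 := fun j hj => by
    simp only [Finset.mem_insert, Finset.mem_singleton, not_or] at hj
    simp [pReal, twoPoint_apply_of_two_le hq (show 2 ≤ j by omega)]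
  rw [missingMass_eq_sum_of_support hr hsupp, Finset.sum_pair zero_ne_one, freq_const_self,
    freq_const_of_ne one_ne_zero, pReal_twoPoint_one]
  simp [hn]

lemma eventually_lt_abs_div_pow_sub_one {ε : ℝ} (hε : ε < 1) (c : ℝ) {r : ℕ}
    (hr : r ≠ 0) :
    ∀ᶠ q in 𝓝[>] (0 : ℝ), ε < |c / q ^ r - 1| := by
  rcases le_or_gt c 0 with hc | hc
  · filter_upwards [self_mem_nhdsWithin] with q (hq : 0 < q)
    have hdiv : c / q ^ r ≤ 0 := div_nonpos_of_nonpos_of_nonneg hc (by positivity)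
    exact hε.trans_le ((by linarith : 1 ≤ -(c / q ^ r - 1)).trans (neg_le_abs _))
  · have hblowup : Tendsto (fun q : ℝ => c / q ^ r) (𝓝[>] 0) atTop := by
      simpa [div_eq_mul_inv, inv_pow] using
        ((tendsto_pow_atTop hr).comp tendsto_inv_nhdsGT_zero).const_mul_atTop hc
    filter_upwards [hblowup.eventually_gt_atTop (1 + ε)] with q hq
    exact (by linarith : ε < c / q ^ r - 1).trans_le (le_abs_self _)

lemma ofReal_one_sub_pow_le_sampleMeasure_twoPoint {r n : ℕ} (hr : r ≠ 0) (hn : n ≠ 0)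
    {q : ℝ} (hq : q ∈ Ioo 0 1) {est : (Fin n → ℕ) → ℝ} {h : ℝ → ℝ} {ε : ℝ}
    (hloss : ε < |est (fun _ => 0) / q ^ r - 1|) :
    let P := twoPoint q (Ioo_subset_Icc_self hq)
    ENNReal.ofReal (1 - q) ^ n ≤
      sampleMeasure P n {ω | mloss h (est ω) (missingMass (pReal P) r ω) > ε} := by
  intro P
  rw [← twoPoint_apply_zero, ← sampleMeasure_const]
  refine measure_mono (singleton_subset_iff.2 ?_)
  rw [mem_ofPred_eq, missingMass_twoPoint_const_zero hr hn, mloss, if_pos (pow_pos hq.1 r)]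
  exact hloss

theorem missingMass_minimax_infeasible_general (r n : ℕ) (hr : 1 ≤ r) (hn : 2 ≤ n)
    (ε : ℝ) (hε : ε ∈ Set.Ioo (0 : ℝ) 1)
    (est : (Fin n → ℕ) → ℝ)
    (h : ℝ → ℝ) :
    ⨆ P : PMF ℕ,
      sampleMeasure P n
        {ω | mloss h (est ω) (missingMass (pReal P) r ω) > ε} = 1 := by
  refine le_antisymm (iSup_le fun P => prob_le_one) ?_
  have hlim : Tendsto (fun q : ℝ => ENNReal.ofReal (1 - q) ^ n) (𝓝[>] 0) (𝓝 1) :=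
    (((ENNReal.continuous_pow n).comp
      (ENNReal.continuous_ofReal.comp (continuous_const.sub continuous_id))).tendsto'
        0 1 (by simp)).mono_left nhdsWithin_le_nhds
  refine le_of_tendsto hlim ?_
  filter_upwards [eventually_lt_abs_div_pow_sub_one hε.2 (est fun _ => 0) (by omega : r ≠ 0),
    Ioo_mem_nhdsGT one_pos] with q hloss hq
  exact le_iSup_of_le _
    (ofReal_one_sub_pow_le_sampleMeasure_twoPoint (by omega) (by omega) hq hloss)

/-- Minimax estimation of the `r`-order missing mass over all discrete distributions
is not feasible: for every estimator, the worst-case probability of a relative error larger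
than `ε` equals one. -/
theorem missingMass_minimax_infeasible (r n : ℕ) (hr : 1 ≤ r) (hn : 2 ≤ n)
    (ε : ℝ) (hε : ε ∈ Set.Ioo (0 : ℝ) 1)
    (est : (Fin n → ℕ) → ℝ) (hest : Measurable est)
    (h : ℝ → ℝ) (hh : Measurable h) :
    ⨆ P : PMF ℕ,
      sampleMeasure P n
        {ω | mloss h (est ω) (missingMass (pReal P) r ω) > ε} = 1 :=
  missingMass_minimax_infeasible_general r n hr hn ε hε est h

end
end

section
/- (Impossibility of weak consistency.) For every r ≥ 1, every ε ∈ (0,1), every measurable function h : ℝ → ℝ, and every sequence (θ̂_{r,n})_{n≥1} of measurable estimators θ̂_{r,n} : ℕ^n → ℝ, one has sup over all probability mass functions P on ℕ of limsup_{n→∞} P_P( ℓ(θ̂_{r,n}(X_n), θ_r(P;X_n)) > ε ) = 1. -/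
open MeasureTheory ProbabilityTheory Real Filter

noncomputable section

/-!
Given the estimators and `δ > 0`, we build one distribution `P` that defeats them at infinitely
many sample sizes `n₀ < n₁ < ⋯`. `P` puts mass `a t` on the symbol `t + 1` and the rest on `0`,
where `a` decreases so fast that, at sample size `n t`, with probability at least `1 - 2δ`
exactly the symbols `0, …, t` are observed; the `r`-order missing mass is then between
`(a t) ^ r` and `2 (a t) ^ r`, so an estimate with relative error at most `ε` lies in the window
`[(1 - ε) (a t) ^ r, 2 (1 + ε) (a t) ^ r]`. The value `a t` is chosen among `1/δ` candidates
`Bⁱ g` whose windows are disjoint: the one whose window the estimator hits with the smallest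
probability, at most `δ`, under the distribution that agrees with `P` on `1, …, t` and carries
the rest of the mass on `0`. As that distribution dominates `P` on `{0, …, t}`, the relative
error exceeds `ε` with probability at least `1 - 3δ` at every `n t`.
-/

open scoped ENNReal

lemma measurableSet_sample {n : ℕ} (s : Set (Fin n → ℕ)) : MeasurableSet s :=
  s.to_countable.measurableSet

instance (P : PMF ℕ) (n : ℕ) : IsProbabilityMeasure (sampleMeasure P n) := by
  unfold sampleMeasure; infer_instance

lemma sampleMeasure_singleton (P : PMF ℕ) {n : ℕ} (ω : Fin n → ℕ) :
    sampleMeasure P n {ω} = ∏ i, P (ω i) := by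
  simp [sampleMeasure, Measure.pi_singleton, PMF.toMeasure_apply_singleton]

lemma sampleMeasure_mono_pmf {P Q : PMF ℕ} {n : ℕ} {s : Set (Fin n → ℕ)}
    (h : ∀ ω ∈ s, ∀ i, P (ω i) ≤ Q (ω i)) :
    sampleMeasure P n s ≤ sampleMeasure Q n s := by
  rw [← Measure.tsum_indicator_apply_singleton _ _ (measurableSet_sample s),
    ← Measure.tsum_indicator_apply_singleton _ _ (measurableSet_sample s)]
  refine ENNReal.tsum_le_tsum fun ω => ?_
  by_cases hω : ω ∈ s
  · simp only [Set.indicator_of_mem hω, sampleMeasure_singleton]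
    exact Finset.prod_le_prod' fun i _ => h ω hω i
  · simp [Set.indicator_of_notMem hω]

lemma sampleMeasure_forall_ne (P : PMF ℕ) (n j : ℕ) :
    sampleMeasure P n {ω | ∀ i, ω i ≠ j} = (1 - P j) ^ n := by
  have hpi : {ω : Fin n → ℕ | ∀ i, ω i ≠ j} = Set.univ.pi fun _ => {j}ᶜ := by
    ext ω; simp
  rw [sampleMeasure, hpi, Measure.pi_pi, prob_compl_eq_one_sub (measurableSet_singleton j),
    PMF.toMeasure_apply_singleton _ _ (measurableSet_singleton j)]
  simp

lemma sampleMeasure_exists_unseen_le (P : PMF ℕ) (n : ℕ) (s : Finset ℕ) :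
    sampleMeasure P n {ω | ∃ j ∈ s, ∀ i, ω i ≠ j} ≤ ∑ j ∈ s, (1 - P j) ^ n := by
  have hU : {ω : Fin n → ℕ | ∃ j ∈ s, ∀ i, ω i ≠ j} = ⋃ j ∈ s, {ω | ∀ i, ω i ≠ j} := by
    ext ω; simp
  rw [hU]
  refine (measure_biUnion_finset_le s _).trans_eq ?_
  simp only [sampleMeasure_forall_ne]

lemma sampleMeasure_exists_mem_le (P : PMF ℕ) (n : ℕ) (s : Set ℕ) :
    sampleMeasure P n {ω | ∃ i, ω i ∈ s} ≤ n * P.toMeasure s := by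
  have hU : {ω : Fin n → ℕ | ∃ i, ω i ∈ s} = ⋃ i, Function.eval i ⁻¹' s := by
    ext ω; simp
  have hmarg (i : Fin n) : sampleMeasure P n (Function.eval i ⁻¹' s) = P.toMeasure s :=
    (measurePreserving_eval _ i).measure_preimage s.to_countable.measurableSet.nullMeasurableSet
  rw [hU]
  refine (measure_iUnion_fintype_le _ _).trans_eq ?_
  simp [hmarg]

lemma range_eq_Iic_or {n : ℕ} (ω : Fin n → ℕ) (t : ℕ) :
    Set.range ω = Set.Iic t ∨ (∃ j ∈ Finset.range (t + 1), ∀ i, ω i ≠ j) ∨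
      ∃ i, ω i ∈ Set.Ioi t := by
  by_cases hseen : ∃ i, ω i ∈ Set.Ioi t
  · exact Or.inr (Or.inr hseen)
  by_cases hmiss : ∃ j ∈ Finset.range (t + 1), ∀ i, ω i ≠ j
  · exact Or.inr (Or.inl hmiss)
  refine Or.inl (Set.Subset.antisymm ?_ fun j hj => ?_)
  · exact Set.range_subset_iff.2 fun i => Set.mem_Iic.2 (not_lt.1 fun hi => hseen ⟨i, hi⟩)
  · by_contra hj'
    exact hmiss ⟨j, Finset.mem_range.2 (Nat.lt_succ_of_le hj), fun i hi => hj' ⟨i, hi⟩⟩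

lemma freq_eq_zero_iff {n : ℕ} (ω : Fin n → ℕ) (j : ℕ) : freq ω j = 0 ↔ j ∉ Set.range ω := by
  simp [freq, Finset.card_eq_zero, Finset.filter_eq_empty_iff]

lemma missingMass_of_range_eq_Iic (p : ℕ → ℝ) (r : ℕ) {n t : ℕ} {ω : Fin n → ℕ}
    (hω : Set.range ω = Set.Iic t) : missingMass p r ω = ∑' m, p (t + m + 1) ^ r := by
  have hsupp : Function.support (fun j => p j ^ r * if freq ω j = 0 then 1 else 0) ⊆
      Set.range (t + · + 1) := by
    intro j hj
    have : t < j := by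
      by_contra hjt
      simp [freq_eq_zero_iff, hω, not_lt.1 hjt] at hj
    exact ⟨j - (t + 1), by dsimp only; omega⟩
  rw [missingMass, ← (add_left_injective 1 |>.comp (add_right_injective t)).tsum_eq hsupp]
  congr 1 with m
  simp [freq_eq_zero_iff, hω]

lemma mem_Icc_of_mloss_le {h : ℝ → ℝ} {u θ ε : ℝ} (hθ : 0 < θ) (hu : mloss h u θ ≤ ε) :
    u ∈ Set.Icc ((1 - ε) * θ) ((1 + ε) * θ) := by
  rw [mloss, if_pos hθ, abs_le, le_sub_iff_add_le, sub_le_iff_le_add, le_div_iff₀ hθ,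
    div_le_iff₀ hθ] at hu
  constructor <;> linarith [hu.1, hu.2]

lemma card_mul_le_measure_univ {α ι : Type*} [MeasurableSpace α] (μ : Measure α) {s : Finset ι}
    {E : ι → Set α} (hd : (s : Set ι).PairwiseDisjoint E) (hm : ∀ i ∈ s, MeasurableSet (E i))
    {c : ℝ≥0∞} (hc : ∀ i ∈ s, c ≤ μ (E i)) : s.card * c ≤ μ Set.univ :=
  calc (s.card : ℝ≥0∞) * c = s.card • c := (nsmul_eq_mul _ _).symm
    _ ≤ ∑ i ∈ s, μ (E i) := Finset.card_nsmul_le_sum s _ c hc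
    _ = μ (⋃ i ∈ s, E i) := (measure_biUnion_finset hd hm).symm
    _ ≤ μ Set.univ := measure_mono (Set.subset_univ _)

lemma one_sub_pow_le_inv {x : ℝ} (hx0 : 0 ≤ x) (hx1 : x ≤ 1) (n : ℕ) :
    (1 - x) ^ n ≤ (1 + n * x)⁻¹ :=
  calc (1 - x) ^ n ≤ rexp (-x) ^ n := pow_le_pow_left₀ (by linarith) (one_sub_le_exp_neg x) n
    _ = (rexp (n * x))⁻¹ := by rw [← Real.exp_nat_mul, ← Real.exp_neg, mul_neg]
    _ ≤ (1 + n * x)⁻¹ := inv_anti₀ (by positivity) (by linarith [add_one_le_exp (n * x)])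

section Halving

variable {x : ℕ → ℝ}

lemma le_mul_half_pow_of_halving (hx : ∀ m, x (m + 1) ≤ x m / 2) (m : ℕ) :
    x m ≤ x 0 * (1 / 2) ^ m := by
  induction m with
  | zero => simp
  | succ m ih =>
    calc x (m + 1) ≤ x m / 2 := hx m
      _ ≤ x 0 * (1 / 2) ^ m / 2 := by gcongr
      _ = x 0 * (1 / 2) ^ (m + 1) := by ring

variable (h0 : ∀ m, 0 ≤ x m) (hx : ∀ m, x (m + 1) ≤ x m / 2)
include h0 hx

lemma summable_of_halving : Summable x :=
  Summable.of_nonneg_of_le h0 (le_mul_half_pow_of_halving hx) (summable_geometric_two.mul_left _)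

lemma tsum_le_of_halving : ∑' m, x m ≤ 2 * x 0 :=
  calc ∑' m, x m ≤ ∑' m, x 0 * (1 / 2) ^ m :=
        (summable_of_halving h0 hx).tsum_le_tsum (le_mul_half_pow_of_halving hx)
          (summable_geometric_two.mul_left _)
    _ = 2 * x 0 := by rw [tsum_mul_left, tsum_geometric_two]; ring

lemma pow_succ_le_half_of_halving {r : ℕ} (hr : 1 ≤ r) (m : ℕ) : x (m + 1) ^ r ≤ x m ^ r / 2 :=
  calc x (m + 1) ^ r ≤ (x m / 2) ^ r := pow_le_pow_left₀ (h0 _) (hx m) r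
    _ = x m ^ r / 2 ^ r := div_pow _ _ _
    _ ≤ x m ^ r / 2 := div_le_div_of_nonneg_left (pow_nonneg (h0 m) r) two_pos
        (le_self_pow₀ (by norm_num) (by omega))

lemma tsum_pow_mem_Icc_of_halving {r : ℕ} (hr : 1 ≤ r) :
    ∑' m, x m ^ r ∈ Set.Icc (x 0 ^ r) (2 * x 0 ^ r) := by
  have h0r (m : ℕ) : 0 ≤ x m ^ r := pow_nonneg (h0 m) r
  have hxr := pow_succ_le_half_of_halving h0 hx hr
  exact ⟨(summable_of_halving h0r hxr).le_tsum 0 fun m _ => h0r m, tsum_le_of_halving h0r hxr⟩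

end Halving

/-- The pmf with mass `a j` at `j + 1` and the remaining mass `1 - ∑ a` at `0`
(the Dirac mass at `0` when `∑ a > 1`). -/
def restAtZero (a : ℕ → ℝ≥0∞) : PMF ℕ :=
  if h : ∑' j, a j ≤ 1 then
    show PMF ℕ from ⟨fun | 0 => 1 - ∑' j, a j | j + 1 => a j,
      ENNReal.summable.hasSum_iff.2 <| by
        rw [tsum_eq_zero_add' ENNReal.summable]; exact tsub_add_cancel_of_le h⟩
  else PMF.pure 0

section RestAtZero

variable {a : ℕ → ℝ≥0∞} (h : ∑' j, a j ≤ 1)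
include h

lemma restAtZero_zero : restAtZero a 0 = 1 - ∑' j, a j := by
  rw [restAtZero, dif_pos h]; rfl

lemma restAtZero_succ (j : ℕ) : restAtZero a (j + 1) = a j := by
  rw [restAtZero, dif_pos h]; rfl

lemma restAtZero_le_restAtZero_truncate {t v : ℕ} (hv : v ≤ t) :
    restAtZero a v ≤ restAtZero (fun j => if j < t then a j else 0) v := by
  have hle : ∑' j, (if j < t then a j else 0) ≤ ∑' j, a j :=
    ENNReal.tsum_le_tsum fun j => by split_ifs <;> simp
  have ht := hle.trans h
  cases v with
  | zero => rw [restAtZero_zero h, restAtZero_zero ht]; exact tsub_le_tsub_left hle 1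
  | succ j => rw [restAtZero_succ h, restAtZero_succ ht, if_pos (by omega)]

end RestAtZero

namespace Adversary

structure Setup where
  r : ℕ
  ε : ℝ
  δ : ℝ
  est : (n : ℕ) → (Fin n → ℕ) → ℝ
  one_le_r : 1 ≤ r
  ε_pos : 0 < ε
  ε_lt_one : ε < 1
  δ_pos : 0 < δ
  δ_le_one : δ ≤ 1

/-- Agrees with `Setup.pmf` on `1, …, t` and dominates it at `0`, but only reads the masses of
the stages before `t`. -/
def reference (a : ℕ → ℝ) (t : ℕ) : PMF ℕ :=
  restAtZero fun j => if j < t then ENNReal.ofReal (a j) else 0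

lemma reference_congr {a a' : ℕ → ℝ} {t : ℕ} (h : ∀ j < t, a j = a' j) :
    reference a t = reference a' t := by
  unfold reference
  congr 1 with j
  split_ifs with hj
  · rw [h j hj]
  · rfl

namespace Setup

variable (S : Setup)

def base : ℕ := ⌈4 / (1 - S.ε)⌉₊

def levels : ℕ := ⌈S.δ⁻¹⌉₊

def maxMult : ℕ := S.base ^ S.levels

def scaleOf (n : ℕ) : ℝ := S.δ / (4 * S.maxMult * (n + 1))

/-- `sizes (t + 1)` is the sample size of stage `t`. The first summand makes the masses of
successive stages drop by half at least; the second makes every symbol `≤ t`, whose mass is at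
least `scaleOf (sizes t)`, appear with probability at least `1 - δ`. -/
def sizes : ℕ → ℕ
  | 0 => 0
  | t + 1 => 2 * S.maxMult * (sizes t + 1) + ⌈(t + 1) / (S.δ * S.scaleOf (sizes t))⌉₊

def sampleSize (t : ℕ) : ℕ := S.sizes (t + 1)

def scale (t : ℕ) : ℝ := S.scaleOf (S.sampleSize t)

def candidate (t i : ℕ) : ℝ := S.base ^ i * S.scale t

def window (x : ℝ) : Set ℝ := Set.Icc ((1 - S.ε) * x ^ S.r) (2 * (1 + S.ε) * x ^ S.r)

def hits (t : ℕ) (x : ℝ) : Set (Fin (S.sampleSize t) → ℕ) := S.est _ ⁻¹' S.window x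

def bestExponent (Q : PMF ℕ) (t : ℕ) : ℕ :=
  Classical.choose <| (Finset.range (S.levels + 1)).exists_min_image
    (fun i => sampleMeasure Q (S.sampleSize t) (S.hits t (S.candidate t i)))
    Finset.nonempty_range_add_one

def exponent (t : ℕ) : ℕ :=
  S.bestExponent (reference (fun j => if j < t then S.candidate j (exponent j) else 0) t) t

def mass (t : ℕ) : ℝ := S.candidate t (S.exponent t)

def pmf : PMF ℕ := restAtZero fun j => ENNReal.ofReal (S.mass j)

def good (t : ℕ) : Set (Fin (S.sampleSize t) → ℕ) := {ω | Set.range ω = Set.Iic t}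

lemma one_sub_ε_pos : 0 < 1 - S.ε := sub_pos.2 S.ε_lt_one

lemma four_le_mul_base : 4 ≤ (1 - S.ε) * S.base := by
  have h := Nat.le_ceil (4 / (1 - S.ε))
  rw [div_le_iff₀ S.one_sub_ε_pos] at h
  rw [base]; linarith

lemma one_le_base : (1 : ℝ) ≤ S.base := by
  nlinarith [S.four_le_mul_base, S.ε_pos, (Nat.cast_nonneg S.base : (0 : ℝ) ≤ S.base)]

lemma one_le_maxMult : 1 ≤ S.maxMult :=
  Nat.one_le_pow _ _ (by exact_mod_cast zero_lt_one.trans_le S.one_le_base)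

lemma maxMult_pos : (0 : ℝ) < S.maxMult := by exact_mod_cast S.one_le_maxMult

lemma inv_levels_succ_le : ((S.levels : ℝ) + 1)⁻¹ ≤ S.δ :=
  inv_le_of_inv_le₀ S.δ_pos ((Nat.le_ceil _).trans (le_add_of_nonneg_right zero_le_one))

lemma δ_div_le_quarter (n : ℕ) : S.δ / (4 * (n + 1)) ≤ 1 / 4 := by
  rw [div_le_div_iff₀ (by positivity) (by norm_num)]
  nlinarith [S.δ_le_one, S.δ_pos, (Nat.cast_nonneg n : (0 : ℝ) ≤ n)]

lemma scaleOf_pos (n : ℕ) : 0 < S.scaleOf n := by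
  have := S.δ_pos
  have := S.maxMult_pos
  unfold scaleOf; positivity

lemma maxMult_mul_scaleOf (n : ℕ) : S.maxMult * S.scaleOf n = S.δ / (4 * (n + 1)) := by
  have := S.maxMult_pos
  unfold scaleOf; field_simp

lemma scaleOf_antitone : Antitone S.scaleOf := fun m n hmn => by
  have := S.δ_pos
  have := S.maxMult_pos
  unfold scaleOf; gcongr

lemma scaleOf_le_quarter (n : ℕ) : S.scaleOf n ≤ 1 / 4 :=
  calc S.scaleOf n ≤ S.maxMult * S.scaleOf n :=
        le_mul_of_one_le_left (S.scaleOf_pos n).le (by exact_mod_cast S.one_le_maxMult)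
    _ ≤ 1 / 4 := (S.maxMult_mul_scaleOf n).trans_le (S.δ_div_le_quarter n)

lemma le_sizes_succ (t : ℕ) : 2 * S.maxMult * (S.sizes t + 1) ≤ S.sizes (t + 1) :=
  Nat.le_add_right _ _

lemma sizes_lt_sizes_succ (t : ℕ) : S.sizes t < S.sizes (t + 1) := by
  have := S.le_sizes_succ t
  have := S.one_le_maxMult
  nlinarith

lemma le_sizes (t : ℕ) : t ≤ S.sizes t := by
  induction t with
  | zero => exact Nat.zero_le _
  | succ t ih => exact ih.trans_lt (S.sizes_lt_sizes_succ t)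

lemma sizes_mono : Monotone S.sizes :=
  monotone_nat_of_le_succ fun t => (S.sizes_lt_sizes_succ t).le

lemma succ_mul_one_sub_scaleOf_pow_le (t : ℕ) :
    (t + 1) * (1 - S.scaleOf (S.sizes t)) ^ S.sizes (t + 1) ≤ S.δ := by
  set c := S.scaleOf (S.sizes t)
  set n := S.sizes (t + 1)
  have hc : 0 < c := S.scaleOf_pos _
  have hn : ((t : ℝ) + 1) / (S.δ * c) ≤ n :=
    (Nat.le_ceil _).trans (Nat.cast_le.2 (Nat.le_add_left _ _))
  rw [div_le_iff₀ (mul_pos S.δ_pos hc)] at hn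
  calc (t + 1) * (1 - c) ^ n ≤ (t + 1) * (1 + n * c)⁻¹ := by
        gcongr; exact one_sub_pow_le_inv hc.le (S.scaleOf_le_quarter _ |>.trans (by norm_num)) n
    _ ≤ S.δ := by
        rw [← div_eq_mul_inv, div_le_iff₀ (by positivity)]
        nlinarith [S.δ_pos]

lemma bestExponent_spec (Q : PMF ℕ) (t : ℕ) :
    S.bestExponent Q t ≤ S.levels ∧ ∀ i ≤ S.levels,
      sampleMeasure Q (S.sampleSize t) (S.hits t (S.candidate t (S.bestExponent Q t))) ≤
        sampleMeasure Q (S.sampleSize t) (S.hits t (S.candidate t i)) := by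
  unfold bestExponent
  generalize_proofs h
  obtain ⟨hmem, hmin⟩ := Classical.choose_spec h
  exact ⟨Nat.lt_succ_iff.1 (Finset.mem_range.1 hmem),
    fun i hi => hmin i (Finset.mem_range.2 (Nat.lt_succ_of_le hi))⟩

lemma exponent_eq (t : ℕ) : S.exponent t = S.bestExponent (reference S.mass t) t := by
  rw [exponent, reference_congr fun j hj => if_pos hj]
  rfl

lemma exponent_le (t : ℕ) : S.exponent t ≤ S.levels := by
  rw [exponent_eq]; exact (S.bestExponent_spec _ t).1

lemma candidate_pos (t i : ℕ) : 0 < S.candidate t i :=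
  mul_pos (pow_pos (zero_lt_one.trans_le S.one_le_base) i) (S.scaleOf_pos _)

lemma window_disjoint {x y : ℝ} (hx : 0 < x) (hxy : S.base * x ≤ y) :
    Disjoint (S.window x) (S.window y) := by
  have hxr : 0 < x ^ S.r := pow_pos hx _
  have hyr : S.base * x ^ S.r ≤ y ^ S.r :=
    calc S.base * x ^ S.r ≤ (S.base : ℝ) ^ S.r * x ^ S.r := by
          gcongr; exact le_self_pow₀ S.one_le_base (by have := S.one_le_r; omega)
      _ = (S.base * x) ^ S.r := (mul_pow _ _ _).symm
      _ ≤ y ^ S.r := pow_le_pow_left₀ (by have := S.one_le_base; positivity) hxy _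
  refine Set.disjoint_left.2 fun u hu hv => ?_
  have := S.four_le_mul_base
  nlinarith [hu.2, hv.1, S.ε_lt_one, S.one_sub_ε_pos]

open Function in
lemma pairwise_disjoint_hits (t : ℕ) :
    Pairwise (Disjoint on fun i => S.hits t (S.candidate t i)) := by
  refine (pairwise_disjoint_on _).2 fun i j hij => Disjoint.preimage _ ?_
  refine S.window_disjoint (S.candidate_pos t i) ?_
  calc S.base * S.candidate t i = (S.base : ℝ) ^ (i + 1) * S.scale t := by
        rw [candidate, pow_succ]; ring
    _ ≤ S.candidate t j :=
        mul_le_mul_of_nonneg_right (pow_le_pow_right₀ S.one_le_base hij) (S.scaleOf_pos _).le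

/-- Pigeonhole over the `levels + 1` disjoint windows. -/
lemma reference_hits_mass_le (t : ℕ) :
    sampleMeasure (reference S.mass t) (S.sampleSize t) (S.hits t (S.mass t)) ≤
      ENNReal.ofReal S.δ := by
  obtain ⟨-, hmin⟩ := S.bestExponent_spec (reference S.mass t) t
  rw [← S.exponent_eq] at hmin
  have key := card_mul_le_measure_univ _ ((S.pairwise_disjoint_hits t).set_pairwise _)
    (fun i _ => measurableSet_sample _)
    (fun i hi => hmin i (Nat.lt_succ_iff.1 (Finset.mem_range.1 hi)))
  rw [measure_univ, Finset.card_range, mul_comm, ← ENNReal.le_inv_iff_mul_le] at key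
  refine key.trans ?_
  rw [← ENNReal.ofReal_natCast, ← ENNReal.ofReal_inv_of_pos (by positivity)]
  exact ENNReal.ofReal_le_ofReal (by exact_mod_cast S.inv_levels_succ_le)

lemma mass_pos (t : ℕ) : 0 < S.mass t := S.candidate_pos _ _

lemma scale_le_mass (t : ℕ) : S.scale t ≤ S.mass t :=
  le_mul_of_one_le_left (S.scaleOf_pos _).le (one_le_pow₀ S.one_le_base)

lemma mass_le (t : ℕ) : S.mass t ≤ S.δ / (4 * (S.sampleSize t + 1)) := by
  rw [← S.maxMult_mul_scaleOf]
  refine mul_le_mul_of_nonneg_right ?_ (S.scaleOf_pos _).le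
  rw [maxMult, Nat.cast_pow]
  exact pow_le_pow_right₀ S.one_le_base (S.exponent_le t)

lemma mass_succ_le (t : ℕ) : S.mass (t + 1) ≤ S.mass t / 2 := by
  have hn : (2 * S.maxMult * (S.sampleSize t + 1) : ℝ) ≤ S.sampleSize (t + 1) + 1 := by
    have : (2 * S.maxMult * (S.sampleSize t + 1) : ℝ) ≤ S.sampleSize (t + 1) := by
      exact_mod_cast S.le_sizes_succ (t + 1)
    linarith
  have := S.maxMult_pos
  calc S.mass (t + 1) ≤ S.δ / (4 * (S.sampleSize (t + 1) + 1)) := S.mass_le _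
    _ ≤ S.δ / (4 * (2 * S.maxMult * (S.sampleSize t + 1))) := by
        have := S.δ_pos; gcongr
    _ = S.scale t / 2 := by rw [scale, scaleOf]; field_simp
    _ ≤ S.mass t / 2 := div_le_div_of_nonneg_right (S.scale_le_mass t) zero_le_two

lemma sampleSize_mul_mass_le (t : ℕ) : S.sampleSize t * (2 * S.mass t) ≤ S.δ :=
  calc S.sampleSize t * (2 * S.mass t)
      ≤ S.sampleSize t * (2 * (S.δ / (4 * (S.sampleSize t + 1)))) := by
        gcongr; exact S.mass_le t
    _ ≤ S.δ := by
        rw [mul_div_assoc', mul_div_assoc', div_le_iff₀ (by positivity)]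
        nlinarith [S.δ_pos]

lemma tsum_ofReal_mass_le : ∑' j, ENNReal.ofReal (S.mass j) ≤ ENNReal.ofReal (1 / 2) := by
  have h0 (t : ℕ) : 0 ≤ S.mass t := (S.mass_pos t).le
  rw [← ENNReal.ofReal_tsum_of_nonneg h0 (summable_of_halving h0 S.mass_succ_le)]
  refine ENNReal.ofReal_le_ofReal ?_
  linarith [tsum_le_of_halving h0 S.mass_succ_le, (S.mass_le 0).trans (S.δ_div_le_quarter _)]

lemma tsum_ofReal_mass_le_one : ∑' j, ENNReal.ofReal (S.mass j) ≤ 1 :=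
  S.tsum_ofReal_mass_le.trans (ENNReal.ofReal_le_one.2 (by norm_num))

lemma pmf_succ (j : ℕ) : S.pmf (j + 1) = ENNReal.ofReal (S.mass j) :=
  restAtZero_succ S.tsum_ofReal_mass_le_one j

lemma pReal_pmf_succ (j : ℕ) : pReal S.pmf (j + 1) = S.mass j := by
  rw [pReal, pmf_succ, ENNReal.toReal_ofReal (S.mass_pos j).le]

lemma pmf_le_reference {t v : ℕ} (hv : v ≤ t) : S.pmf v ≤ reference S.mass t v :=
  restAtZero_le_restAtZero_truncate S.tsum_ofReal_mass_le_one hv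

lemma scaleOf_le_pmf {t j : ℕ} (hj : j ≤ t) :
    ENNReal.ofReal (S.scaleOf (S.sizes t)) ≤ S.pmf j := by
  cases j with
  | zero =>
    rw [pmf, restAtZero_zero S.tsum_ofReal_mass_le_one]
    refine ENNReal.le_sub_of_add_le_right
      (S.tsum_ofReal_mass_le_one.trans_lt ENNReal.one_lt_top).ne ?_
    calc ENNReal.ofReal (S.scaleOf (S.sizes t)) + ∑' j, ENNReal.ofReal (S.mass j)
        ≤ ENNReal.ofReal (1 / 2) + ENNReal.ofReal (1 / 2) :=
          add_le_add (ENNReal.ofReal_le_ofReal ((S.scaleOf_le_quarter _).trans (by norm_num)))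
            S.tsum_ofReal_mass_le
      _ = 1 := by rw [← ENNReal.ofReal_add (by norm_num) (by norm_num)]; norm_num
  | succ i =>
    rw [pmf_succ]
    exact ENNReal.ofReal_le_ofReal
      ((S.scaleOf_antitone (S.sizes_mono hj)).trans (S.scale_le_mass i))

lemma pmf_toMeasure_Ioi_le (t : ℕ) :
    S.pmf.toMeasure (Set.Ioi t) ≤ ENNReal.ofReal (2 * S.mass t) := by
  have hsupp : Function.support ((Set.Ioi t).indicator S.pmf) ⊆ Set.range (t + · + 1) := by
    intro j hj
    have : t < j := (Set.indicator_apply_ne_zero.1 hj).1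
    exact ⟨j - (t + 1), by dsimp only; omega⟩
  have hterm (m : ℕ) :
      (Set.Ioi t).indicator S.pmf (t + m + 1) = ENNReal.ofReal (S.mass (t + m)) := by
    rw [Set.indicator_of_mem (Set.mem_Ioi.2 (by omega)), pmf_succ]
  have h0 (m : ℕ) : 0 ≤ S.mass (t + m) := (S.mass_pos _).le
  have hhalf (m : ℕ) : S.mass (t + (m + 1)) ≤ S.mass (t + m) / 2 := S.mass_succ_le (t + m)
  rw [PMF.toMeasure_apply_eq_tsum,
    ← (add_left_injective 1 |>.comp (add_right_injective t)).tsum_eq hsupp,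
    Function.comp_def, tsum_congr hterm,
    ← ENNReal.ofReal_tsum_of_nonneg h0 (summable_of_halving h0 hhalf)]
  exact ENNReal.ofReal_le_ofReal (tsum_le_of_halving h0 hhalf)

lemma missingMass_mem_Icc {t : ℕ} {ω : Fin (S.sampleSize t) → ℕ} (hω : ω ∈ S.good t) :
    missingMass (pReal S.pmf) S.r ω ∈ Set.Icc (S.mass t ^ S.r) (2 * S.mass t ^ S.r) := by
  rw [missingMass_of_range_eq_Iic _ _ hω]
  simp only [pReal_pmf_succ]
  exact tsum_pow_mem_Icc_of_halving (x := fun m => S.mass (t + m)) (fun m => (S.mass_pos _).le)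
    (fun m => S.mass_succ_le (t + m)) S.one_le_r

lemma good_diff_hits_subset (h : ℝ → ℝ) (t : ℕ) :
    S.good t \ S.hits t (S.mass t) ⊆
      {ω | mloss h (S.est _ ω) (missingMass (pReal S.pmf) S.r ω) > S.ε} := by
  rintro ω ⟨hgood, hmiss⟩
  by_contra hle
  obtain ⟨hlo, hhi⟩ := S.missingMass_mem_Icc hgood
  have hθ := (pow_pos (S.mass_pos t) S.r).trans_le hlo
  obtain ⟨h1, h2⟩ := mem_Icc_of_mloss_le hθ (not_lt.1 hle)
  have := S.one_sub_ε_pos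
  exact hmiss ⟨by nlinarith, by nlinarith [S.ε_pos]⟩

lemma measure_good_inter_hits_le (t : ℕ) :
    sampleMeasure S.pmf (S.sampleSize t) (S.good t ∩ S.hits t (S.mass t)) ≤ ENNReal.ofReal S.δ :=
  calc _ ≤ sampleMeasure (reference S.mass t) (S.sampleSize t)
          (S.good t ∩ S.hits t (S.mass t)) :=
        sampleMeasure_mono_pmf fun _ hω i =>
          S.pmf_le_reference (Set.mem_Iic.1 (hω.1 ▸ Set.mem_range_self i))
    _ ≤ sampleMeasure (reference S.mass t) (S.sampleSize t) (S.hits t (S.mass t)) :=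
        measure_mono Set.inter_subset_right
    _ ≤ ENNReal.ofReal S.δ := S.reference_hits_mass_le t

lemma measure_exists_unseen_le (t : ℕ) :
    sampleMeasure S.pmf (S.sampleSize t) {ω | ∃ j ∈ Finset.range (t + 1), ∀ i, ω i ≠ j} ≤
      ENNReal.ofReal S.δ := by
  set c := S.scaleOf (S.sizes t)
  have hc : 0 ≤ c := (S.scaleOf_pos _).le
  have hc1 : c ≤ 1 := (S.scaleOf_le_quarter _).trans (by norm_num)
  calc _ ≤ ∑ j ∈ Finset.range (t + 1), (1 - S.pmf j) ^ S.sampleSize t :=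
        sampleMeasure_exists_unseen_le _ _ _
    _ ≤ ∑ j ∈ Finset.range (t + 1), ENNReal.ofReal ((1 - c) ^ S.sampleSize t) := by
        refine Finset.sum_le_sum fun j hj => ?_
        rw [ENNReal.ofReal_pow (sub_nonneg.2 hc1), ENNReal.ofReal_sub _ hc, ENNReal.ofReal_one]
        exact pow_le_pow_left' (tsub_le_tsub_left
          (S.scaleOf_le_pmf (Nat.lt_succ_iff.1 (Finset.mem_range.1 hj))) 1) _
    _ = ENNReal.ofReal ((t + 1) * (1 - c) ^ S.sampleSize t) := by
        rw [Finset.sum_const, Finset.card_range, nsmul_eq_mul, ENNReal.ofReal_mul (by positivity)]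
        norm_cast
    _ ≤ ENNReal.ofReal S.δ := ENNReal.ofReal_le_ofReal (S.succ_mul_one_sub_scaleOf_pow_le t)

lemma measure_exists_gt_le (t : ℕ) :
    sampleMeasure S.pmf (S.sampleSize t) {ω | ∃ i, ω i ∈ Set.Ioi t} ≤ ENNReal.ofReal S.δ :=
  calc _ ≤ S.sampleSize t * S.pmf.toMeasure (Set.Ioi t) := sampleMeasure_exists_mem_le _ _ _
    _ ≤ S.sampleSize t * ENNReal.ofReal (2 * S.mass t) := by
        gcongr; exact S.pmf_toMeasure_Ioi_le t
    _ = ENNReal.ofReal (S.sampleSize t * (2 * S.mass t)) := by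
        rw [ENNReal.ofReal_mul (Nat.cast_nonneg _), ENNReal.ofReal_natCast]
    _ ≤ ENNReal.ofReal S.δ := ENNReal.ofReal_le_ofReal (S.sampleSize_mul_mass_le t)

lemma measure_good_compl_le (t : ℕ) :
    sampleMeasure S.pmf (S.sampleSize t) (S.good t)ᶜ ≤
      ENNReal.ofReal S.δ + ENNReal.ofReal S.δ :=
  calc _ ≤ sampleMeasure S.pmf (S.sampleSize t)
        ({ω | ∃ j ∈ Finset.range (t + 1), ∀ i, ω i ≠ j} ∪ {ω | ∃ i, ω i ∈ Set.Ioi t}) :=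
        measure_mono fun ω hω => (range_eq_Iic_or ω t).resolve_left hω
    _ ≤ _ := (measure_union_le _ _).trans
        (add_le_add (S.measure_exists_unseen_le t) (S.measure_exists_gt_le t))

lemma one_le_measure_fail_add (h : ℝ → ℝ) (t : ℕ) :
    1 ≤ sampleMeasure S.pmf (S.sampleSize t)
        {ω | mloss h (S.est _ ω) (missingMass (pReal S.pmf) S.r ω) > S.ε} +
      ENNReal.ofReal (3 * S.δ) := by
  set μ := sampleMeasure S.pmf (S.sampleSize t)
  have hδ := S.δ_pos.le
  calc 1 = μ (S.good t \ S.hits t (S.mass t)) + μ (S.good t ∩ S.hits t (S.mass t)) +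
        μ (S.good t)ᶜ := by
        rw [measure_sdiff_add_inter _ (measurableSet_sample _),
          prob_add_prob_compl (measurableSet_sample _)]
    _ ≤ μ {ω | mloss h (S.est _ ω) (missingMass (pReal S.pmf) S.r ω) > S.ε} +
        ENNReal.ofReal S.δ + (ENNReal.ofReal S.δ + ENNReal.ofReal S.δ) :=
        add_le_add (add_le_add (measure_mono (S.good_diff_hits_subset h t))
          (S.measure_good_inter_hits_le t)) (S.measure_good_compl_le t)
    _ = _ := by
        rw [show 3 * S.δ = S.δ + (S.δ + S.δ) by ring, ENNReal.ofReal_add hδ (by positivity),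
          ENNReal.ofReal_add hδ hδ, add_assoc]

lemma one_sub_le_limsup (h : ℝ → ℝ) :
    1 - ENNReal.ofReal (3 * S.δ) ≤ limsup (fun n => sampleMeasure S.pmf n
      {ω | mloss h (S.est n ω) (missingMass (pReal S.pmf) S.r ω) > S.ε}) atTop :=
  le_limsup_of_frequently_le' <| frequently_atTop.2 fun N =>
    ⟨S.sampleSize N, (Nat.le_succ N).trans (S.le_sizes _),
      tsub_le_iff_right.2 (S.one_le_measure_fail_add h N)⟩

end Setup

end Adversary

theorem missingMass_weak_consistency_impossible_general (r : ℕ) (hr : 1 ≤ r)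
    (ε : ℝ) (hε : ε ∈ Set.Ioo (0 : ℝ) 1)
    (h : ℝ → ℝ)
    (est : (n : ℕ) → (Fin n → ℕ) → ℝ) :
    ⨆ P : PMF ℕ,
      Filter.limsup
        (fun n => sampleMeasure P n
          {ω | mloss h (est n ω) (missingMass (pReal P) r ω) > ε})
        Filter.atTop = 1 := by
  refine le_antisymm (iSup_le fun P => limsup_le_of_le (h := .of_forall fun n => prob_le_one)) ?_
  refine ENNReal.le_of_forall_pos_le_add fun η hη _ => ?_
  set δ : ℝ := min (η / 3) 1
  have hδ : 0 < δ := lt_min (by positivity) one_pos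
  have h3δ : ENNReal.ofReal (3 * δ) ≤ η := by
    rw [ENNReal.ofReal_le_iff_le_toReal ENNReal.coe_ne_top, ENNReal.coe_toReal]
    linarith [min_le_left (η / 3 : ℝ) 1]
  let S : Adversary.Setup := ⟨r, ε, δ, est, hr, hε.1, hε.2, hδ, min_le_right _ _⟩
  calc 1 ≤ _ + ENNReal.ofReal (3 * δ) := tsub_le_iff_right.1 (S.one_sub_le_limsup h)
    _ ≤ _ := add_le_add (le_iSup_of_le S.pmf le_rfl) h3δ

/-- Impossibility of weak consistency: for every sequence of estimators of the `r`-order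
missing mass, the worst case (over all discrete distributions) of the limsup of the
probability of a relative error larger than `ε` equals one. -/
theorem missingMass_weak_consistency_impossible (r : ℕ) (hr : 1 ≤ r)
    (ε : ℝ) (hε : ε ∈ Set.Ioo (0 : ℝ) 1)
    (h : ℝ → ℝ) (hh : Measurable h)
    (est : (n : ℕ) → (Fin n → ℕ) → ℝ) (hest : ∀ n, Measurable (est n)) :
    ⨆ P : PMF ℕ,
      Filter.limsup
        (fun n => sampleMeasure P n
          {ω | mloss h (est n ω) (missingMass (pReal P) r ω) > ε})
        Filter.atTop = 1 :=
  missingMass_weak_consistency_impossible_general r hr ε hε h est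

end
end

section
/- (Density of regularly varying distributions.) For every probability mass function P on ℕ, every α ∈ (0,1), every ε > 0, and every constant L > 0, there exists a probability mass function Q on ℕ with lim_{x→0} x^α F̄_Q(x) = L and total variation distance ‖P − Q‖_TV ≤ ε. -/
set_option maxHeartbeats 1000000

open MeasureTheory ProbabilityTheory Real Filter
open Topology

noncomputable section

/-- The tail function `F̄_P(x) = #{j : p_j > x}`. -/
def tailF (P : PMF ℕ) (x : ℝ) : ℕ := Set.ncard {j | x < pReal P j}

lemma aux_iff {c α x : ℝ} (hc : 0 < c) (hα : 0 < α) (hx : 0 < x) {i : ℕ} (hi : 0 < i) :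
    x < c * (i : ℝ) ^ (-α⁻¹) ↔ (i : ℝ) < (c / x) ^ α := by
  rw [← div_lt_iff₀' hc, show -α⁻¹ = (-α)⁻¹ from neg_inv,
    lt_rpow_inv_iff_of_neg (div_pos hx hc) (by exact_mod_cast hi) (neg_neg_iff_pos.mpr hα),
    Real.rpow_neg (div_pos hx hc).le, ← Real.inv_rpow (div_pos hx hc).le, inv_div]

/-- Density of regularly varying distributions: any discrete distribution `P` on `ℕ` can be
approximated in total variation, to any accuracy `ε`, by a distribution `Q` whose tail
function satisfies `lim_{x→0} x^α F̄_Q(x) = L`. -/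
theorem regularly_varying_dense (P : PMF ℕ) (α : ℝ) (hα : α ∈ Set.Ioo (0 : ℝ) 1)
    (ε : ℝ) (hε : 0 < ε) (L : ℝ) (hL : 0 < L) :
    ∃ Q : PMF ℕ,
      Tendsto (fun x => x ^ α * (tailF Q x : ℝ)) (nhdsWithin 0 (Set.Ioi 0)) (nhds L) ∧
      (1 / 2) * ∑' j, |pReal P j - pReal Q j| ≤ ε := by
  obtain ⟨hα0, hα1⟩ := hα
  set p : ℕ → ℝ := pReal P with hpdef
  have hp0 : ∀ j, 0 ≤ p j := fun j => ENNReal.toReal_nonneg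
  have hpsummable : Summable p :=
    ENNReal.summable_toReal (by rw [P.tsum_coe]; exact ENNReal.one_ne_top)
  have hpsum : ∑' j, p j = 1 := by
    have := ENNReal.tsum_toReal_eq (fun j => P.apply_ne_top j)
    simp only [hpdef, pReal] at *
    rw [← this, P.tsum_coe, ENNReal.toReal_one]
  -- constants
  set δ : ℝ := min ε 1 / 4 with hδdef
  have hδ0 : 0 < δ := by have := lt_min hε one_pos; positivity
  have hδε : δ ≤ ε / 4 := by
    have : min ε 1 ≤ ε := min_le_left _ _
    simp only [hδdef]; linarith
  have hδ1 : δ ≤ 1 / 4 := by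
    have : min ε 1 ≤ 1 := min_le_right _ _
    simp only [hδdef]; linarith
  set c : ℝ := L ^ α⁻¹ with hcdef
  have hc0 : 0 < c := Real.rpow_pos_of_pos hL _
  have hcα : c ^ α = L := Real.rpow_inv_rpow hL.le hα0.ne'
  -- choose N with tail of p small
  obtain ⟨N, hN⟩ : ∃ N : ℕ, ∑' k, p (k + N) ≤ ε / 4 := by
    have h1 : Tendsto (fun i => ∑' k, p (k + i)) atTop (nhds 0) := tendsto_sum_nat_add p
    exact (h1.eventually_le_const (show (0:ℝ) < ε / 4 by linarith)).exists
  set T : ℝ := ∑' k, p (k + N) with hTdef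
  have hT0 : 0 ≤ T := tsum_nonneg fun k => hp0 _
  set S : ℝ := ∑ j ∈ Finset.range N, p j with hSdef
  have hS0 : 0 ≤ S := Finset.sum_nonneg fun j _ => hp0 j
  have hST : S + T = 1 := by rw [hSdef, hTdef, Summable.sum_add_tsum_nat_add N hpsummable, hpsum]
  have hS1 : S ≤ 1 := by linarith
  -- the regularly varying tail function
  set h : ℕ → ℝ := fun i => c * (i : ℝ) ^ (-α⁻¹) with hhdef
  have hh0 : ∀ i, 0 ≤ h i := fun i =>
    mul_nonneg hc0.le (Real.rpow_nonneg (Nat.cast_nonneg i) _)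
  have hhsummable : Summable h := by
    apply Summable.mul_left
    rw [Real.summable_nat_rpow]
    have : 1 < α⁻¹ := (one_lt_inv₀ hα0).mpr hα1
    linarith
  -- choose the shift i₀
  obtain ⟨i₀, hi₀m, hi₀1⟩ : ∃ i₀ : ℕ, ∑' k, h (k + i₀) ≤ δ ∧ 1 ≤ i₀ := by
    have h1 : Tendsto (fun i => ∑' k, h (k + i)) atTop (nhds 0) := tendsto_sum_nat_add h
    exact ((h1.eventually_le_const hδ0).and (eventually_ge_atTop 1)).exists
  set m : ℝ := ∑' k, h (k + i₀) with hmdef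
  have hm0 : 0 ≤ m := tsum_nonneg fun k => hh0 _
  set K : ℕ := i₀ - 1 with hKdef
  have hK1 : K + 1 = i₀ := by omega
  -- target pmf (real valued)
  set r : ℝ := 1 - (1 - δ) * S - m with hrdef
  have hr0 : 0 ≤ r := by nlinarith
  set q : ℕ → ℝ := fun j => if j < N then (1 - δ) * p j else if j = N then r else h (j - N + K)
    with hqdef
  have hq0 : ∀ j, 0 ≤ q j := by
    intro j
    simp only [hqdef]
    split_ifs
    · exact mul_nonneg (by linarith) (hp0 j)
    · exact hr0
    · exact hh0 _
  have hqtail : ∀ k : ℕ, q (k + (N + 1)) = h (k + i₀) := by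
    intro k
    simp only [hqdef]
    rw [if_neg (by omega), if_neg (by omega)]
    congr 1
    omega
  have hqsummable : Summable q := by
    apply (summable_nat_add_iff (N + 1)).mp
    apply Summable.congr ((summable_nat_add_iff i₀).mpr hhsummable)
    intro k
    exact (hqtail k).symm
  have hqsum : ∑' j, q j = 1 := by
    rw [← Summable.sum_add_tsum_nat_add (N + 1) hqsummable]
    have e1 : ∑' k, q (k + (N + 1)) = m := by
      rw [hmdef]; exact tsum_congr hqtail
    have e2 : ∑ j ∈ Finset.range (N + 1), q j = (1 - δ) * S + r := by
      rw [Finset.sum_range_succ]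
      have e3 : ∑ j ∈ Finset.range N, q j = (1 - δ) * S := by
        rw [hSdef, Finset.mul_sum]
        apply Finset.sum_congr rfl
        intro j hj
        simp only [hqdef, if_pos (Finset.mem_range.mp hj)]
      have e4 : q N = r := by simp only [hqdef]; simp
      rw [e3, e4]
    rw [e1, e2, hrdef]; ring
  -- the PMF
  have hQsum : HasSum (fun j => ENNReal.ofReal (q j)) 1 := by
    rw [Summable.hasSum_iff ENNReal.summable, ← ENNReal.ofReal_tsum_of_nonneg hq0 hqsummable,
      hqsum, ENNReal.ofReal_one]
  set Q : PMF ℕ := ⟨fun j => ENNReal.ofReal (q j), hQsum⟩ with hQdef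
  have hQapp : ∀ j, pReal Q j = q j := by
    intro j
    show (ENNReal.ofReal (q j)).toReal = q j
    exact ENNReal.toReal_ofReal (hq0 j)
  refine ⟨Q, ?_, ?_⟩
  · -- the tendsto statement
    have key : ∀ x : ℝ, 0 < x →
        L - ((K : ℝ) + 1) * x ^ α ≤ x ^ α * (tailF Q x : ℝ) ∧
        x ^ α * (tailF Q x : ℝ) ≤ L + ((N : ℝ) + 1) * x ^ α := by
      intro x hx
      have hxα0 : 0 ≤ x ^ α := Real.rpow_nonneg hx.le α
      set y : ℝ := (c / x) ^ α with hydef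
      have hy0 : 0 ≤ y := Real.rpow_nonneg (by positivity) _
      have hxαy : x ^ α * y = L := by
        rw [hydef, Real.div_rpow hc0.le hx.le, mul_div_cancel₀ _ (by positivity : x ^ α ≠ 0), hcα]
      set w : ℝ := y + (N : ℝ) - (K : ℝ) with hwdef
      set M : ℕ := ⌈w⌉₊ with hMdef
      have hsetEq : {j | x < pReal Q j} = {j | x < q j} := by
        ext j; simp only [Set.mem_setOf_eq, hQapp]
      have hmem : ∀ j, N < j → (x < q j ↔ (j : ℝ) < w) := by
        intro j hj
        have e : q j = h (j - N + K) := by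
          simp only [hqdef]; rw [if_neg (by omega), if_neg (by omega)]
        rw [e, hhdef]
        have hi : 0 < j - N + K := by omega
        rw [aux_iff hc0 hα0 hx hi]
        have hNj : N ≤ j := by omega
        have hcast : ((j - N + K : ℕ) : ℝ) = (j : ℝ) - (N : ℝ) + (K : ℝ) := by
          rw [Nat.cast_add, Nat.cast_sub hNj]
        rw [hcast]
        constructor <;> intro hh' <;> [skip; skip] <;> simp only [hwdef, hydef] at * <;> linarith
      have hsub1 : ↑(Finset.Ioo N M) ⊆ {j | x < q j} := by
        intro j hj
        simp only [Finset.coe_Ioo, Set.mem_Ioo] at hj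
        exact Set.mem_setOf_eq ▸ (hmem j hj.1).mpr (Nat.lt_ceil.mp hj.2)
      have hsub2 : {j | x < q j} ⊆ ↑(Finset.range (N + 1) ∪ Finset.Ioo N M) := by
        intro j hj
        simp only [Set.mem_setOf_eq] at hj
        simp only [Finset.coe_union, Set.mem_union, Finset.mem_coe, Finset.mem_range,
          Finset.mem_Ioo]
        by_cases hjN : j ≤ N
        · left; omega
        · right
          exact ⟨by omega, Nat.lt_ceil.mpr ((hmem j (by omega)).mp hj)⟩
      have hfin : {j | x < q j}.Finite := Set.Finite.subset (Finset.finite_toSet _) hsub2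
      have hcard_le : tailF Q x ≤ (N + 1) + (Finset.Ioo N M).card := by
        rw [tailF, hsetEq]
        calc Set.ncard {j | x < q j}
            ≤ Set.ncard ↑(Finset.range (N + 1) ∪ Finset.Ioo N M) :=
              Set.ncard_le_ncard hsub2 (Finset.finite_toSet _)
          _ = (Finset.range (N + 1) ∪ Finset.Ioo N M).card := Set.ncard_coe_finset _
          _ ≤ (Finset.range (N + 1)).card + (Finset.Ioo N M).card := Finset.card_union_le _ _
          _ = (N + 1) + (Finset.Ioo N M).card := by rw [Finset.card_range]
      have hcard_ge : (Finset.Ioo N M).card ≤ tailF Q x := by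
        rw [tailF, hsetEq, ← Set.ncard_coe_finset]
        exact Set.ncard_le_ncard hsub1 hfin
      have hcardval : (Finset.Ioo N M).card = M - N - 1 := Nat.card_Ioo N M
      have hwM : w ≤ (M : ℝ) := Nat.le_ceil w
      have hcard_lb : w - (N : ℝ) - 1 ≤ ((Finset.Ioo N M).card : ℝ) := by
        rcases le_or_gt (N + 1) M with hc1 | hc1
        · have hcr : ((Finset.Ioo N M).card : ℝ) = (M : ℝ) - (N : ℝ) - 1 := by
            rw [hcardval]
            have : M - N - 1 = M - (N + 1) := by omega
            rw [this, Nat.cast_sub hc1]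
            push_cast; ring
          rw [hcr]; linarith
        · have hMN : (M : ℝ) ≤ (N : ℝ) := by exact_mod_cast Nat.lt_succ_iff.mp hc1
          have := Nat.cast_nonneg (α := ℝ) (Finset.Ioo N M).card
          linarith
      have hcard_ub : x ^ α * ((Finset.Ioo N M).card : ℝ) ≤ L := by
        rcases Nat.eq_zero_or_pos (Finset.Ioo N M).card with hc2 | hc2
        · rw [hc2]; simpa using hL.le
        · have hM2 : N + 2 ≤ M := by omega
          have hw0 : 0 < w := by
            rw [hMdef] at hM2
            exact Nat.ceil_pos.mp (by omega)
          have hMw : (M : ℝ) < w + 1 := Nat.ceil_lt_add_one hw0.le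
          have hcr : ((Finset.Ioo N M).card : ℝ) = (M : ℝ) - (N : ℝ) - 1 := by
            rw [hcardval]
            have : M - N - 1 = M - (N + 1) := by omega
            rw [this, Nat.cast_sub (by omega)]
            push_cast; ring
          have hK0 : (0 : ℝ) ≤ (K : ℝ) := Nat.cast_nonneg K
          have h3 : ((Finset.Ioo N M).card : ℝ) ≤ y := by
            rw [hcr]; simp only [hwdef] at hMw ⊢; linarith
          calc x ^ α * ((Finset.Ioo N M).card : ℝ) ≤ x ^ α * y :=
                mul_le_mul_of_nonneg_left h3 hxα0
            _ = L := hxαy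
      constructor
      · have h4 : x ^ α * (w - (N : ℝ) - 1) ≤ x ^ α * ((Finset.Ioo N M).card : ℝ) :=
          mul_le_mul_of_nonneg_left hcard_lb hxα0
        have h5 : x ^ α * ((Finset.Ioo N M).card : ℝ) ≤ x ^ α * (tailF Q x : ℝ) :=
          mul_le_mul_of_nonneg_left (by exact_mod_cast hcard_ge) hxα0
        have h6 : x ^ α * (w - (N : ℝ) - 1) = L - ((K : ℝ) + 1) * x ^ α := by
          have hwy : w - (N : ℝ) - 1 = y - ((K : ℝ) + 1) := by rw [hwdef]; ring
          rw [hwy, mul_sub, hxαy]; ring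
        linarith
      · have h7 : x ^ α * (tailF Q x : ℝ) ≤ x ^ α * ((N : ℝ) + 1 + ((Finset.Ioo N M).card : ℝ)) := by
          apply mul_le_mul_of_nonneg_left _ hxα0
          exact_mod_cast hcard_le
        have h8 : x ^ α * ((N : ℝ) + 1 + ((Finset.Ioo N M).card : ℝ))
            = ((N : ℝ) + 1) * x ^ α + x ^ α * ((Finset.Ioo N M).card : ℝ) := by ring
        linarith
    have hxαtendsto : Tendsto (fun x : ℝ => x ^ α) (nhdsWithin 0 (Set.Ioi 0)) (nhds 0) := by
      have h1 : ContinuousAt (fun x : ℝ => x ^ α) 0 :=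
        Real.continuousAt_rpow_const 0 α (Or.inr hα0.le)
      have h2 := h1.tendsto
      rw [Real.zero_rpow hα0.ne'] at h2
      exact h2.mono_left nhdsWithin_le_nhds
    refine tendsto_of_tendsto_of_tendsto_of_le_of_le'
      (g := fun x : ℝ => L - ((K : ℝ) + 1) * x ^ α)
      (h := fun x : ℝ => L + ((N : ℝ) + 1) * x ^ α) ?_ ?_ ?_ ?_
    · simpa using tendsto_const_nhds.sub (hxαtendsto.const_mul ((K : ℝ) + 1))
    · simpa using tendsto_const_nhds.add (hxαtendsto.const_mul ((N : ℝ) + 1))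
    · exact eventually_nhdsWithin_of_forall fun x hx => (key x hx).1
    · exact eventually_nhdsWithin_of_forall fun x hx => (key x hx).2
  · -- the total variation bound
    have htv : ∑' j, |pReal P j - pReal Q j| = ∑' j, |p j - q j| :=
      tsum_congr fun j => by rw [hQapp j, hpdef]
    rw [htv]
    set v : ℕ → ℝ := fun j => δ * p j + (if j < N then 0 else p j + q j) with hvdef
    have hw : Summable (fun j : ℕ => if j < N then (0 : ℝ) else p j + q j) := by
      apply (summable_nat_add_iff N).mp
      apply Summable.congr
        (((summable_nat_add_iff N).mpr hpsummable).add ((summable_nat_add_iff N).mpr hqsummable))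
      intro k
      rw [if_neg (by omega)]
    have hv : Summable v := (hpsummable.mul_left δ).add hw
    have hbound : ∀ j, |p j - q j| ≤ v j := by
      intro j
      simp only [hvdef, hqdef]
      by_cases hjN : j < N
      · rw [if_pos hjN, if_pos hjN]
        have : p j - (1 - δ) * p j = δ * p j := by ring
        rw [this, abs_of_nonneg (mul_nonneg hδ0.le (hp0 j))]
        linarith
      · rw [if_neg hjN, if_neg hjN]
        have hq0' : 0 ≤ (if j = N then r else h (j - N + K)) := by
          split_ifs; exacts [hr0, hh0 _]
        rw [abs_le]
        constructor
        · nlinarith [hp0 j, mul_nonneg hδ0.le (hp0 j)]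
        · nlinarith [hp0 j, mul_nonneg hδ0.le (hp0 j)]
    have habs_summable : Summable fun j => |p j - q j| :=
      Summable.of_nonneg_of_le (fun j => abs_nonneg _) hbound hv
    have h2 : ∑' j, |p j - q j| ≤ ∑' j, v j := Summable.tsum_le_tsum hbound habs_summable hv
    have hvsum : ∑' j, v j = δ + (T + (r + m)) := by
      rw [hvdef, Summable.tsum_add (hpsummable.mul_left δ) hw]
      congr 1
      · rw [tsum_mul_left, hpsum, mul_one]
      · rw [← Summable.sum_add_tsum_nat_add N hw]
        have hhead : ∑ j ∈ Finset.range N, (if j < N then (0:ℝ) else p j + q j) = 0 :=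
          Finset.sum_eq_zero fun j hj => if_pos (Finset.mem_range.mp hj)
        have htail : ∑' k : ℕ, (if (k + N) < N then (0:ℝ) else p (k + N) + q (k + N))
            = T + (r + m) := by
          rw [tsum_congr (fun k => if_neg (by omega : ¬ (k + N < N))),
            Summable.tsum_add ((summable_nat_add_iff N).mpr hpsummable)
              ((summable_nat_add_iff N).mpr hqsummable)]
          congr 1
          rw [Summable.tsum_eq_zero_add ((summable_nat_add_iff N).mpr hqsummable)]
          congr 1
          · simp only [hqdef]; simp
          · rw [hmdef]
            apply tsum_congr
            intro k
            rw [show k + 1 + N = k + (N + 1) by omega, hqtail]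
        rw [hhead, htail, zero_add]
    have hδS : δ * S ≤ δ := mul_le_of_le_one_right hδ0.le hS1
    have hrm : r + m = 1 - S + δ * S := by rw [hrdef]; ring
    rw [hvsum] at h2
    linarith

end
end

section
/- For every constant L > 0 and every α ∈ (0,1) there exists a probability mass function P on ℕ such that lim_{x→0} x^α F̄_P(x) = L. -/
open MeasureTheory ProbabilityTheory Real Filter
open scoped Topology

noncomputable section

/-- For every `L > 0` and `α ∈ (0,1)` there exists a discrete distribution `P` on `ℕ`
whose tail function satisfies `lim_{x→0} x^α F̄_P(x) = L`. -/
theorem exists_pmf_regularly_varying (L : ℝ) (hL : 0 < L) (α : ℝ) (hα : α ∈ Set.Ioo (0 : ℝ) 1) :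
    ∃ P : PMF ℕ,
      Tendsto (fun x => x ^ α * (tailF P x : ℝ)) (nhdsWithin 0 (Set.Ioi 0)) (nhds L) := by
  obtain ⟨hα0, hα1⟩ := hα
  set β : ℝ := 1 / α with hβ
  have hβ1 : 1 < β := one_lt_one_div hα0 hα1
  have hβ0 : 0 < β := lt_trans one_pos hβ1
  set c : ℝ := L ^ (1 / α) with hc
  have hc0 : 0 < c := Real.rpow_pos_of_pos hL _
  set g : ℕ → ℝ := fun j => c * (j : ℝ) ^ (-β) with hg
  have hgsum : Summable g := (Real.summable_nat_rpow.mpr (by linarith)).mul_left c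
  have hg0 : ∀ j, 0 ≤ g j := fun j => mul_nonneg hc0.le (Real.rpow_nonneg (Nat.cast_nonneg j) _)
  obtain ⟨M, hM1, hMle⟩ : ∃ M, 1 ≤ M ∧ ∑' k, g (k + M) ≤ 1 := by
    have h2 := (tendsto_sum_nat_add g).eventually_le_const one_pos
    exact ((h2.and (eventually_ge_atTop 1)).exists.imp fun M h => ⟨h.2, h.1⟩)
  set T : ℝ := ∑' k, g (k + M) with hT
  have hT0 : 0 ≤ T := tsum_nonneg fun k => hg0 _
  set p : ℕ → ℝ := fun j => if j = 0 then 1 - T else if j < M then 0 else g j with hp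
  have hp0 : ∀ j, 0 ≤ p j := by
    intro j
    simp only [hp]
    split_ifs
    · linarith
    · exact le_rfl
    · exact hg0 j
  set h : ℕ → ℝ := fun j => if j < M then 0 else g j with hh
  have hhsum : Summable h := by
    apply hgsum.of_nonneg_of_le
      (fun j => by simp only [hh]; split_ifs; exacts [le_rfl, hg0 j])
    intro j
    simp only [hh]
    split_ifs
    exacts [hg0 j, le_rfl]
  have hhT : HasSum h T := by
    have key := Summable.sum_add_tsum_nat_add M hhsum
    have h1 : ∑ i ∈ Finset.range M, h i = 0 := by
      apply Finset.sum_eq_zero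
      intro i hi
      simp only [hh, if_pos (Finset.mem_range.mp hi)]
    have h2 : ∑' i, h (i + M) = T := by
      rw [hT]
      congr 1
      funext i
      simp only [hh, if_neg (by omega : ¬ i + M < M)]
    rw [h1, h2, zero_add] at key
    rw [key]
    exact hhsum.hasSum
  have hpsum : HasSum p 1 := by
    have he : HasSum (fun j => if j = 0 then (1 - T : ℝ) else 0) (1 - T) := hasSum_ite_eq 0 _
    have hs := he.add hhT
    have hfun : (fun j => (if j = 0 then (1 - T : ℝ) else 0) + h j) = p := by
      funext j
      rcases eq_or_ne j 0 with rfl | hj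
      · have h0M : 0 < M := hM1
        simp [hh, hp, h0M]
      · simp [hh, hp, hj]
    rw [hfun] at hs
    simpa using hs
  have hPsum : HasSum (fun j => ENNReal.ofReal (p j)) 1 := by
    have heq := ENNReal.ofReal_tsum_of_nonneg hp0 hpsum.summable
    rw [hpsum.tsum_eq] at heq
    simp only [ENNReal.ofReal_one] at heq
    rw [heq]
    exact ENNReal.summable.hasSum
  set P : PMF ℕ := ⟨fun j => ENNReal.ofReal (p j), hPsum⟩ with hP
  have hPj : ∀ j, pReal P j = p j := by
    intro j
    have : P j = ENNReal.ofReal (p j) := rfl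
    rw [pReal, this]
    exact ENNReal.toReal_ofReal (hp0 j)
  refine ⟨P, ?_⟩
  have htail : ∀ x, tailF P x = Set.ncard {j | x < p j} := by
    intro x
    unfold tailF
    congr 1
    ext j
    rw [Set.mem_setOf_eq, Set.mem_setOf_eq, hPj]
  have hβα : β * α = 1 := by rw [hβ]; field_simp
  have hαβ : α * β = 1 := by rw [mul_comm]; exact hβα
  -- key equivalence
  have hkey : ∀ x : ℝ, 0 < x → ∀ j : ℕ, 1 ≤ j → (x < g j ↔ (j : ℝ) < (c / x) ^ α) := by
    intro x hx j hj
    have hj0 : (0:ℝ) < (j:ℝ) := by exact_mod_cast hj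
    have hjβ : (0:ℝ) < (j:ℝ) ^ β := Real.rpow_pos_of_pos hj0 β
    have e1 : g j = c / (j:ℝ) ^ β := by
      rw [show g j = c * (j:ℝ) ^ (-β) from rfl, Real.rpow_neg hj0.le, div_eq_mul_inv]
    rw [e1, lt_div_iff₀ hjβ, mul_comm, ← lt_div_iff₀ hx]
    constructor
    · intro hlt
      have h2 := Real.rpow_lt_rpow hjβ.le hlt hα0
      rwa [← Real.rpow_mul hj0.le, hβα, Real.rpow_one] at h2
    · intro hlt
      have hcx : (0:ℝ) ≤ c / x := div_nonneg hc0.le hx.le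
      have h2 := Real.rpow_lt_rpow (Nat.cast_nonneg j) hlt hβ0
      rwa [← Real.rpow_mul hcx, hαβ, Real.rpow_one] at h2
  have hsub1 : ∀ x : ℝ, 0 < x →
      (↑(Finset.Ico M ⌈(c / x) ^ α⌉₊) : Set ℕ) ⊆ {j | x < p j} := by
    intro x hx j hj
    simp only [Finset.coe_Ico, Set.mem_Ico] at hj
    obtain ⟨hMj, hjN⟩ := hj
    have hj1 : 1 ≤ j := le_trans hM1 hMj
    have hpj : p j = g j := by
      simp only [hp, if_neg (by omega : ¬ j = 0), if_neg (by omega : ¬ j < M)]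
    rw [Set.mem_setOf_eq, hpj]
    exact (hkey x hx j hj1).mpr (Nat.lt_ceil.mp hjN)
  have hsub2 : ∀ x : ℝ, 0 < x →
      {j | x < p j} ⊆ insert 0 (↑(Finset.Ico M ⌈(c / x) ^ α⌉₊) : Set ℕ) := by
    intro x hx j hj
    rw [Set.mem_setOf_eq] at hj
    rcases eq_or_ne j 0 with rfl | hj0
    · exact Set.mem_insert _ _
    · refine Set.mem_insert_of_mem _ ?_
      simp only [Finset.coe_Ico, Set.mem_Ico]
      by_cases hjM : j < M
      · exfalso
        have hz : p j = 0 := by simp only [hp, if_neg hj0, if_pos hjM]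
        rw [hz] at hj; linarith
      · have hpj : p j = g j := by simp only [hp, if_neg hj0, if_neg hjM]
        rw [hpj] at hj
        exact ⟨by omega, Nat.lt_ceil.mpr ((hkey x hx j (by omega)).mp hj)⟩
  have hfin : ∀ x : ℝ, 0 < x → {j | x < p j}.Finite := fun x hx =>
    (Set.Finite.insert 0 (Finset.Ico M ⌈(c / x) ^ α⌉₊).finite_toSet).subset (hsub2 x hx)
  have hxpow : Tendsto (fun x : ℝ => x ^ α) (𝓝[>] (0:ℝ)) (𝓝 0) := by
    have hcont : ContinuousAt (fun x : ℝ => x ^ α) 0 :=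
      Real.continuousAt_rpow_const 0 α (Or.inr hα0.le)
    have h2 : Tendsto (fun x : ℝ => x ^ α) (𝓝[>] (0:ℝ)) (𝓝 ((0:ℝ) ^ α)) :=
      hcont.tendsto.mono_left nhdsWithin_le_nhds
    rwa [Real.zero_rpow hα0.ne'] at h2
  have hlo : Tendsto (fun x : ℝ => L - x ^ α * M) (𝓝[>] (0:ℝ)) (𝓝 L) := by
    have h2 : Tendsto (fun x : ℝ => L - x ^ α * M) (𝓝[>] (0:ℝ)) (𝓝 (L - 0 * M)) :=
      tendsto_const_nhds.sub (hxpow.mul_const (M:ℝ))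
    simpa using h2
  have hhi : Tendsto (fun x : ℝ => L + x ^ α * 2) (𝓝[>] (0:ℝ)) (𝓝 L) := by
    have h2 : Tendsto (fun x : ℝ => L + x ^ α * 2) (𝓝[>] (0:ℝ)) (𝓝 (L + 0 * 2)) :=
      tendsto_const_nhds.add (hxpow.mul_const (2:ℝ))
    simpa using h2
  set x₁ : ℝ := c * ((M:ℝ) + 1) ^ (-β) with hx₁
  have hx₁0 : 0 < x₁ := mul_pos hc0 (Real.rpow_pos_of_pos (by positivity) _)
  have hmem : Set.Ioo (0:ℝ) x₁ ∈ 𝓝[>] (0:ℝ) := Ioo_mem_nhdsGT hx₁0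
  have hcα : c ^ α = L := by
    rw [hc, ← Real.rpow_mul hL.le, one_div_mul_cancel hα0.ne', Real.rpow_one]
  have hbound : ∀ x ∈ Set.Ioo (0:ℝ) x₁,
      L - x ^ α * M ≤ x ^ α * (tailF P x : ℝ) ∧
      x ^ α * (tailF P x : ℝ) ≤ L + x ^ α * 2 := by
    intro x hx
    obtain ⟨hx0, hxx₁⟩ := hx
    set y : ℝ := (c / x) ^ α with hy
    set N : ℕ := ⌈y⌉₊ with hN
    have hcastM : ((M + 1 : ℕ) : ℝ) = (M : ℝ) + 1 := by push_cast; ring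
    have hxg : x < g (M + 1) := by
      rw [show g (M + 1) = c * ((M + 1 : ℕ) : ℝ) ^ (-β) from rfl, hcastM]
      exact hxx₁
    have hMy : ((M : ℝ) + 1) < y := by
      have h2 := (hkey x hx0 (M + 1) (by omega)).mp hxg
      rwa [hcastM] at h2
    have hy0 : 0 ≤ y := Real.rpow_nonneg (div_nonneg hc0.le hx0.le) α
    have hMN : M + 1 < N := Nat.lt_ceil.mpr (by rw [hcastM]; exact hMy)
    have hNy : y ≤ (N : ℝ) := Nat.le_ceil y
    have hNy2 : (N : ℝ) < y + 1 := Nat.ceil_lt_add_one hy0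
    have hxα : 0 < x ^ α := Real.rpow_pos_of_pos hx0 α
    have hLxy : x ^ α * y = L := by
      have hxc : x * (c / x) = c := by field_simp
      rw [hy, ← Real.mul_rpow hx0.le (div_nonneg hc0.le hx0.le), hxc, hcα]
    have htx := htail x
    have hlow : ((N - M : ℕ) : ℝ) ≤ (tailF P x : ℝ) := by
      have h1 : (Finset.Ico M N).card ≤ Set.ncard {j | x < p j} := by
        rw [← Set.ncard_coe_finset]
        exact Set.ncard_le_ncard (hsub1 x hx0) (hfin x hx0)
      rw [htx]
      rw [Nat.card_Ico] at h1
      exact_mod_cast h1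
    have hup : (tailF P x : ℝ) ≤ ((N - M : ℕ) : ℝ) + 1 := by
      have h1 : Set.ncard {j | x < p j} ≤
          (insert 0 (↑(Finset.Ico M N) : Set ℕ)).ncard :=
        Set.ncard_le_ncard (hsub2 x hx0)
          (Set.Finite.insert _ (Finset.finite_toSet _))
      have h2 := h1.trans (Set.ncard_insert_le 0 (↑(Finset.Ico M N) : Set ℕ))
      rw [Set.ncard_coe_finset, Nat.card_Ico] at h2
      rw [htx]
      exact_mod_cast h2
    have hcast : ((N - M : ℕ) : ℝ) = (N : ℝ) - M := by
      have hMN' : M ≤ N := by omega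
      exact Nat.cast_sub hMN'
    constructor
    · have hA : y - (M : ℝ) ≤ (tailF P x : ℝ) := by linarith
      have h2 := mul_le_mul_of_nonneg_left hA hxα.le
      rw [mul_sub, hLxy] at h2
      exact h2
    · have hM0 : (0 : ℝ) ≤ (M : ℝ) := Nat.cast_nonneg M
      have hB : (tailF P x : ℝ) ≤ y + 2 := by linarith
      have h2 := mul_le_mul_of_nonneg_left hB hxα.le
      rw [mul_add, hLxy] at h2
      exact h2
  apply tendsto_of_tendsto_of_tendsto_of_le_of_le' hlo hhi
  · filter_upwards [hmem] with x hx
    exact (hbound x hx).1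
  · filter_upwards [hmem] with x hx
    exact (hbound x hx).2

end
end

section
/- Let X be a random variable with the Beta(a,b) distribution, where a > 0 and b > 1, and let 0 < δ_1 < δ_2. Then sup_{t ≥ 0} P( t δ_1 ≤ X ≤ t δ_2 ) ≤ (δ_2/δ_1 − 1) · √( a(a+b−1) / (2π(b−1)) ) · e^{1/(12(a+b−1))}. -/
/-!
On `[t δ₁, t δ₂]` the Beta density is at most `M / x`, where `M` is the maximum of `x ↦ x p(x)`,
so the probability of that interval is at most `M log (δ₂ / δ₁) ≤ M (δ₂ / δ₁ - 1)`.
Writing `log Γ(x) = (x - 1/2) log x - x + log √(2π) + μ(x)` with Binet's function `μ`,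
the bounds `0 ≤ μ(x) ≤ 1 / (12 x)` turn `M` into the stated constant. They follow by telescoping
`μ(x) - μ(x + 1) = (x + 1/2) log (1 + 1/x) - 1`, which lies in `[0, (1/x - 1/(x+1)) / 12]` by the
power series of `log ((1 + t) / (1 - t))`, together with `μ(x + n) → 0`; the latter comes from
Stirling's formula for `n!` and the log-convexity of `Γ`.
-/

open MeasureTheory Real

noncomputable section

/-- The density of the Beta(a,b) distribution with respect to Lebesgue measure. -/
def betaPDF (a b x : ℝ) : ℝ :=
  if 0 ≤ x ∧ x ≤ 1 then
    Real.Gamma (a + b) / (Real.Gamma a * Real.Gamma b) * x ^ (a - 1) * (1 - x) ^ (b - 1)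
  else 0

/-- The Beta(a,b) distribution on `ℝ`. -/
def betaMeasure (a b : ℝ) : Measure ℝ :=
  volume.withDensity fun x => ENNReal.ofReal (betaPDF a b x)

open Filter Topology

lemma log_Gamma_add_one {y : ℝ} (hy : 0 < y) : log (Gamma (y + 1)) = log (Gamma y) + log y := by
  rw [Gamma_add_one hy.ne', log_mul hy.ne' (Gamma_pos_of_pos hy).ne', add_comm]

def binet (x : ℝ) : ℝ :=
  log (Gamma x) - (x - 1 / 2) * log x + x - log √(2 * π)

lemma binet_sub_binet_add_one {x : ℝ} (hx : 0 < x) :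
    binet x - binet (x + 1) = (x + 1 / 2) * log (1 + x⁻¹) - 1 := by
  have h : 1 + x⁻¹ = (x + 1) / x := by field_simp
  rw [binet, binet, log_Gamma_add_one hx, h, log_div (by positivity) hx.ne']
  ring

lemma hasSum_binet_sub_binet_add_one {x : ℝ} (hx : 0 < x) :
    HasSum (fun k : ℕ => (1 / (2 * x + 1)) ^ (2 * k + 2) / (2 * k + 3))
      (binet x - binet (x + 1)) := by
  have h := (hasSum_nat_add_iff' 1).mpr ((hasSum_log_one_add_inv hx).mul_left (x + 1 / 2))
  have hterm : ∀ k : ℕ, (x + 1 / 2) * (2 * (1 / (2 * ((k + 1 : ℕ) : ℝ) + 1)) *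
      (1 / (2 * x + 1)) ^ (2 * (k + 1) + 1)) = (1 / (2 * x + 1)) ^ (2 * k + 2) / (2 * k + 3) := by
    intro k
    rw [show 2 * (k + 1) + 1 = (2 * k + 2) + 1 by ring, pow_succ]
    push_cast
    field_simp
    ring
  simp only [hterm, Finset.sum_range_one] at h
  convert h using 1
  · rfl
  · rw [binet_sub_binet_add_one hx]
    congr 1
    simp only [Nat.cast_zero, mul_zero, zero_add, pow_one]
    field_simp

lemma binet_sub_binet_add_one_nonneg {x : ℝ} (hx : 0 < x) : 0 ≤ binet x - binet (x + 1) :=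
  (hasSum_binet_sub_binet_add_one hx).nonneg fun k => by positivity

lemma binet_sub_binet_add_one_le {x : ℝ} (hx : 0 < x) :
    binet x - binet (x + 1) ≤ (x⁻¹ - (x + 1)⁻¹) / 12 := by
  have hsum := hasSum_binet_sub_binet_add_one hx
  set t := 1 / (2 * x + 1)
  have ht : t ^ 2 < 1 := by
    have : t < 1 := by rw [div_lt_one (by positivity)]; linarith
    nlinarith [show 0 < t by positivity]
  have hgeom : HasSum (fun k : ℕ => t ^ 2 * (t ^ 2) ^ k / 3) (t ^ 2 * (1 - t ^ 2)⁻¹ / 3) :=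
    ((hasSum_geometric_of_lt_one (by positivity) ht).mul_left (t ^ 2)).div_const 3
  refine (hasSum_le (fun k => ?_) hsum hgeom).trans_eq ?_
  · rw [← pow_mul, ← pow_add, add_comm 2]
    gcongr
    linarith [(k.cast_nonneg : (0:ℝ) ≤ k)]
  · have h1 : 1 - t ^ 2 = 4 * x * (x + 1) / (2 * x + 1) ^ 2 := by
      simp only [t]; field_simp; ring
    rw [h1]
    simp only [t]
    field_simp
    ring

lemma binet_sub_binet_add_nat_mem_Icc {x : ℝ} (hx : 0 < x) (n : ℕ) :
    binet x - binet (x + n) ∈ Set.Icc 0 ((x⁻¹ - (x + n)⁻¹) / 12) := by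
  induction n with
  | zero => simp
  | succ n ih =>
    have hxn : 0 < x + n := by positivity
    have hstep := binet_sub_binet_add_one_le hxn
    have hstep₀ := binet_sub_binet_add_one_nonneg hxn
    push_cast
    rw [← add_assoc]
    constructor <;> linarith [ih.1, ih.2]

lemma log_Gamma_add_sub_log_Gamma_le {y s : ℝ} (hy : 0 < y) (hs : 0 < s) :
    log (Gamma (y + s)) - log (Gamma y) ≤ s * log (y + s) := by
  have h := convexOn_log_Gamma.slope_mono_adjacent (x := y) (y := y + s) (z := y + s + 1)
    (Set.mem_Ioi.mpr hy) (Set.mem_Ioi.mpr (by linarith)) (by linarith) (by linarith)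
  simp only [Function.comp_apply, log_Gamma_add_one (by linarith : 0 < y + s)] at h
  rw [show y + s - y = s by ring, show y + s + 1 - (y + s) = 1 by ring, div_one,
    div_le_iff₀ hs] at h
  linarith

lemma mul_log_sub_one_le_log_Gamma_add_sub_log_Gamma {y s : ℝ} (hy : 1 < y) (hs : 0 < s) :
    s * log (y - 1) ≤ log (Gamma (y + s)) - log (Gamma y) := by
  have h := convexOn_log_Gamma.slope_mono_adjacent (x := y - 1) (y := y) (z := y + s)
    (Set.mem_Ioi.mpr (by linarith)) (Set.mem_Ioi.mpr (by linarith)) (by linarith) (by linarith)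
  have hrec : log (Gamma y) - log (Gamma (y - 1)) = log (y - 1) := by
    have := log_Gamma_add_one (by linarith : 0 < y - 1)
    rw [sub_add_cancel] at this
    linarith
  simp only [Function.comp_apply] at h
  rw [hrec, sub_sub_cancel, show y + s - y = s by ring, div_one, le_div_iff₀ hs] at h
  linarith

lemma tendsto_add_mul_log_add_sub_log (c s : ℝ) :
    Tendsto (fun y => (y + c) * (log (y + s) - log y)) atTop (𝓝 s) := by
  have h := (tendsto_mul_log_one_add_div_atTop s).add
    ((tendsto_log_comp_add_sub_log s).const_mul c)
  rw [mul_zero, add_zero] at h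
  refine h.congr' ?_
  filter_upwards [eventually_gt_atTop 0, eventually_gt_atTop (-s)] with y hy hys
  rw [← log_div (by linarith) hy.ne', add_div, div_self hy.ne', add_comm (1 : ℝ)]
  ring

lemma tendsto_binet_add_sub_binet {s : ℝ} (hs : 0 < s) :
    Tendsto (fun y => binet (y + s) - binet y) atTop (𝓝 0) := by
  have hlow : Tendsto (fun y => s * (log (y + -1) - log y)) atTop (𝓝 0) := by
    simpa using (tendsto_log_comp_add_sub_log (-1)).const_mul s
  have hupp : Tendsto (fun y => s * (log (y + s) - log y)) atTop (𝓝 0) := by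
    simpa using (tendsto_log_comp_add_sub_log s).const_mul s
  have hW : Tendsto (fun y => log (Gamma (y + s)) - log (Gamma y) - s * log y) atTop (𝓝 0) := by
    refine tendsto_of_tendsto_of_tendsto_of_le_of_le' hlow hupp ?_ ?_
    · filter_upwards [eventually_gt_atTop 1] with y hy
      have := mul_log_sub_one_le_log_Gamma_add_sub_log_Gamma hy hs
      rw [← sub_eq_add_neg]
      linarith
    · filter_upwards [eventually_gt_atTop 0] with y hy
      have := log_Gamma_add_sub_log_Gamma_le hy hs
      linarith
  have h := (hW.sub (tendsto_add_mul_log_add_sub_log (s - 1 / 2) s)).add_const s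
  rw [zero_sub, neg_add_cancel] at h
  refine h.congr fun y => ?_
  simp only [binet]
  ring

lemma tendsto_binet_natCast : Tendsto (fun n : ℕ => binet n) atTop (𝓝 0) := by
  have hlim : Tendsto (fun n : ℕ => log (Stirling.stirlingSeq (n + 1)) - log √π) atTop (𝓝 0) := by
    have h := ((continuousAt_log (sqrt_pos.mpr pi_pos).ne').tendsto.comp
      (Stirling.tendsto_stirlingSeq_sqrt_pi.comp (tendsto_add_atTop_nat 1))).sub_const (log √π)
    rwa [sub_self] at h
  refine (tendsto_add_atTop_iff_nat 1).mp (hlim.congr fun n => ?_)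
  have hn : (0 : ℝ) < n + 1 := by positivity
  rw [Stirling.log_stirlingSeq_formula, binet, Nat.factorial_succ, Nat.cast_mul,
    Nat.cast_add_one, ← Gamma_nat_eq_factorial, log_mul hn.ne' (Gamma_pos_of_pos hn).ne',
    log_div hn.ne' (exp_pos 1).ne', log_exp, log_mul two_ne_zero hn.ne', log_sqrt pi_pos.le,
    log_sqrt (by positivity), log_mul two_ne_zero pi_pos.ne']
  ring

lemma tendsto_binet_add_natCast {x : ℝ} (hx : 0 < x) :
    Tendsto (fun n : ℕ => binet (x + n)) atTop (𝓝 0) := by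
  have h := ((tendsto_binet_add_sub_binet hx).comp tendsto_natCast_atTop_atTop).add
    tendsto_binet_natCast
  rw [zero_add] at h
  refine h.congr fun n => ?_
  simp only [Function.comp_apply, add_comm x]
  ring

lemma binet_nonneg {x : ℝ} (hx : 0 < x) : 0 ≤ binet x := by
  have h := (tendsto_binet_add_natCast hx).const_sub (binet x)
  rw [sub_zero] at h
  exact ge_of_tendsto' h fun n => (binet_sub_binet_add_nat_mem_Icc hx n).1

lemma binet_le {x : ℝ} (hx : 0 < x) : binet x ≤ 1 / (12 * x) := by
  have h := (tendsto_binet_add_natCast hx).const_sub (binet x)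
  rw [sub_zero] at h
  refine le_of_tendsto' h fun n => (binet_sub_binet_add_nat_mem_Icc hx n).2.trans ?_
  have : 0 ≤ (x + n)⁻¹ := by positivity
  rw [one_div, mul_inv, div_eq_mul_inv]
  linarith

lemma rpow_mul_one_sub_rpow_le {a c x : ℝ} (ha : 0 < a) (hc : 0 < c) (hx₀ : 0 ≤ x)
    (hx₁ : x ≤ 1) : x ^ a * (1 - x) ^ c ≤ a ^ a * c ^ c / (a + c) ^ (a + c) := by
  have hs : 0 < a + c := by positivity
  rcases hx₀.eq_or_lt with rfl | hx₀
  · rw [zero_rpow ha.ne', zero_mul]; positivity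
  rcases hx₁.eq_or_lt with rfl | hx₁
  · rw [sub_self, zero_rpow hc.ne', mul_zero]; positivity
  have h1x : 0 < 1 - x := by linarith
  rw [← log_le_log_iff (by positivity) (by positivity)]
  simp (disch := positivity) only [log_mul, log_div, log_rpow]
  have hxa := log_le_sub_one_of_pos (show 0 < x * (a + c) / a by positivity)
  have hxc := log_le_sub_one_of_pos (show 0 < (1 - x) * (a + c) / c by positivity)
  simp (disch := positivity) only [log_mul, log_div] at hxa hxc
  have e1 : a * (x * (a + c) / a - 1) = x * (a + c) - a := by field_simp
  have e2 : c * ((1 - x) * (a + c) / c - 1) = (1 - x) * (a + c) - c := by field_simp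
  linarith [mul_le_mul_of_nonneg_left hxa ha.le, mul_le_mul_of_nonneg_left hxc hc.le]

/-- The maximum of `x ↦ x * betaPDF a b x`, attained at `x = a / (a + b - 1)`. -/
def betaMulPDFMax (a b : ℝ) : ℝ :=
  Gamma (a + b) / (Gamma a * Gamma b) * (a ^ a * (b - 1) ^ (b - 1) / (a + b - 1) ^ (a + b - 1))

lemma betaMulPDFMax_nonneg {a b : ℝ} (ha : 0 < a) (hb : 1 < b) : 0 ≤ betaMulPDFMax a b := by
  have := Gamma_pos_of_pos ha
  have := Gamma_pos_of_pos (by linarith : 0 < b)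
  have := Gamma_pos_of_pos (by linarith : 0 < a + b)
  have : 0 < b - 1 := by linarith
  have : 0 < a + b - 1 := by linarith
  unfold betaMulPDFMax
  positivity

lemma betaPDF_le_betaMulPDFMax_div {a b x : ℝ} (ha : 0 < a) (hb : 1 < b) (hx : 0 < x) :
    betaPDF a b x ≤ betaMulPDFMax a b / x := by
  unfold betaPDF
  split_ifs with h
  · have hmode := rpow_mul_one_sub_rpow_le ha (by linarith : 0 < b - 1) h.1 h.2
    rw [show a + (b - 1) = a + b - 1 by ring] at hmode
    have hK : 0 ≤ Gamma (a + b) / (Gamma a * Gamma b) := by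
      have := Gamma_pos_of_pos ha
      have := Gamma_pos_of_pos (by linarith : 0 < b)
      have := Gamma_pos_of_pos (by linarith : 0 < a + b)
      positivity
    rw [rpow_sub_one hx.ne', le_div_iff₀ hx, betaMulPDFMax]
    calc _ = Gamma (a + b) / (Gamma a * Gamma b) * (x ^ a * (1 - x) ^ (b - 1)) := by
          field_simp
      _ ≤ _ := mul_le_mul_of_nonneg_left hmode hK
  · exact div_nonneg (betaMulPDFMax_nonneg ha hb) hx.le

lemma betaMulPDFMax_le {a b : ℝ} (ha : 0 < a) (hb : 1 < b) :
    betaMulPDFMax a b ≤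
      √(a * (a + b - 1) / (2 * π * (b - 1))) * exp (1 / (12 * (a + b - 1))) := by
  obtain ⟨c, hc, rfl⟩ : ∃ c, 0 < c ∧ b = c + 1 := ⟨b - 1, by linarith, by ring⟩
  have hs : 0 < a + c := by positivity
  rw [betaMulPDFMax, show a + (c + 1) - 1 = a + c by ring, show a + (c + 1) = a + c + 1 by ring,
    add_sub_cancel_right, Gamma_add_one hs.ne', Gamma_add_one hc.ne']
  have := Gamma_pos_of_pos hs
  have := Gamma_pos_of_pos ha
  have := Gamma_pos_of_pos hc
  have hR : 0 < a * (a + c) / (2 * π * c) := by positivity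
  rw [← log_le_log_iff (by positivity) (by positivity),
    log_mul (sqrt_pos.2 hR).ne' (exp_pos _).ne', log_exp, log_sqrt hR.le]
  simp (disch := positivity) only [log_mul, log_div, log_rpow]
  have hlogΓ : ∀ y, log (Gamma y) = binet y + (y - 1 / 2) * log y - y + log √(2 * π) := by
    intro y; rw [binet]; ring
  rw [hlogΓ (a + c), hlogΓ a, hlogΓ c, log_sqrt (by positivity), log_mul two_ne_zero pi_pos.ne']
  linarith [binet_nonneg ha, binet_nonneg hc, binet_le hs]

lemma withDensity_Icc_le_of_le_div {f : ℝ → ℝ} {C l r : ℝ} (hC : 0 ≤ C) (hl : 0 < l)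
    (hlr : l ≤ r) (hf : ∀ x ∈ Set.Icc l r, f x ≤ C / x) :
    volume.withDensity (fun x => ENNReal.ofReal (f x)) (Set.Icc l r) ≤
      ENNReal.ofReal (C * log (r / l)) := by
  have hpos : ∀ x ∈ Set.Icc l r, 0 < x := fun x hx => hl.trans_le hx.1
  have hint : IntegrableOn (fun x => C / x) (Set.Icc l r) :=
    (continuousOn_const.div continuousOn_id fun x hx => (hpos x hx).ne').integrableOn_Icc
  have hval : ∫ x in Set.Icc l r, C / x = C * log (r / l) := by
    simp_rw [div_eq_mul_inv C]
    rw [integral_Icc_eq_integral_Ioc, ← intervalIntegral.integral_of_le hlr,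
      intervalIntegral.integral_const_mul, integral_inv_of_pos hl (hl.trans_le hlr)]
  rw [withDensity_apply _ measurableSet_Icc, ← hval, ofReal_integral_eq_lintegral_ofReal hint
    ((ae_restrict_iff' measurableSet_Icc).2 (ae_of_all _ fun x hx => by
      have := hpos x hx; positivity))]
  exact setLIntegral_mono (by fun_prop) fun x hx => ENNReal.ofReal_le_ofReal (hf x hx)

/-- Anti-concentration bound for the Beta(a,b) distribution, `a > 0`, `b > 1`: for all
`0 < δ₁ < δ₂`, `sup_{t ≥ 0} P(t δ₁ ≤ X ≤ t δ₂)` is at most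
`(δ₂/δ₁ − 1) √(a(a+b−1)/(2π(b−1))) e^{1/(12(a+b−1))}`. -/
theorem beta_anticoncentration (a b : ℝ) (ha : 0 < a) (hb : 1 < b)
    (δ₁ δ₂ : ℝ) (h₁ : 0 < δ₁) (h₂ : δ₁ < δ₂) :
    ⨆ t ∈ Set.Ici (0 : ℝ), betaMeasure a b {y | t * δ₁ ≤ y ∧ y ≤ t * δ₂} ≤
      ENNReal.ofReal ((δ₂ / δ₁ - 1) * Real.sqrt (a * (a + b - 1) / (2 * Real.pi * (b - 1))) *
        Real.exp (1 / (12 * (a + b - 1)))) := by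
  refine iSup₂_le fun t ht => ?_
  rcases (Set.mem_Ici.mp ht).eq_or_lt with rfl | ht
  · have hnull : volume (Set.Icc (0 * δ₁) (0 * δ₂)) = 0 := by simp
    exact (withDensity_absolutelyContinuous _ _ hnull).trans_le bot_le
  have hl : 0 < t * δ₁ := mul_pos ht h₁
  have hratio : t * δ₂ / (t * δ₁) = δ₂ / δ₁ := mul_div_mul_left _ _ ht.ne'
  have hlog : log (δ₂ / δ₁) ≤ δ₂ / δ₁ - 1 := log_le_sub_one_of_pos (div_pos (h₁.trans h₂) h₁)
  have hr : 0 ≤ δ₂ / δ₁ - 1 := by rw [sub_nonneg, one_le_div h₁]; exact h₂.le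
  have hC := betaMulPDFMax_nonneg ha hb
  calc betaMeasure a b (Set.Icc (t * δ₁) (t * δ₂))
      ≤ ENNReal.ofReal (betaMulPDFMax a b * log (δ₂ / δ₁)) := by
        rw [← hratio]
        exact withDensity_Icc_le_of_le_div hC hl (by gcongr)
          fun x hx => betaPDF_le_betaMulPDFMax_div ha hb (hl.trans_le hx.1)
    _ ≤ _ := by
        refine ENNReal.ofReal_le_ofReal ?_
        calc betaMulPDFMax a b * log (δ₂ / δ₁) ≤ betaMulPDFMax a b * (δ₂ / δ₁ - 1) := by gcongr
          _ ≤ _ := by rw [mul_comm, mul_assoc]; gcongr; exact betaMulPDFMax_le ha hb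
end
end

section
/- Let (ξ_j)_{j≥1} be i.i.d. exponential random variables with rate 1 and let Γ_k = ξ_1 + … + ξ_k (the jump times of a standard homogeneous Poisson process on the half real line). Let 0 < δ < 1/2. Then for every ε > 0 there exists a constant B > 0 such that with probability at least 1 − ε, sup_{x ∈ (0,∞)} x^{−(1/2+δ)} | #{j ≥ 1 : Γ_j ≤ x} − x | ≤ B. -/
/-!
The exponential law has moment generating function `(1 - s)⁻¹`, so Chernoff's bound gives
`P(|Γ_k - k| ≥ k ^ p) ≤ 2 exp (-k ^ (2p - 1) / 8)` for `p = 1/2 + δ`. This is summable, and by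
Borel–Cantelli almost surely `|Γ_k - k| ≤ B k ^ p` for all `k ≥ 1`, with a random `B`. Inverting
this control of the points gives `|N(x) - x| ≤ C (1 + x ^ p)` for the counting function `N`, and
since no point lies below `Γ_1 > 0`, `x ^ (-p) |N(x) - x|` is bounded on `(0, ∞)`. An almost
surely finite random bound is below a deterministic one with probability at least `1 - ε`.
-/
open MeasureTheory ProbabilityTheory Real Filter

lemma expMeasure_eq_withDensity (r : ℝ) :
    expMeasure r = volume.withDensity (exponentialPDF r) := rfl

lemma measurable_exponentialPDF (r : ℝ) : Measurable (exponentialPDF r) :=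
  (measurable_exponentialPDFReal r).ennreal_ofReal

lemma exponentialPDF_toReal_mul_exp {r : ℝ} (hr : 0 < r) (t x : ℝ) :
    (exponentialPDF r x).toReal * exp (t * x)
      = (Set.Ici 0).indicator (fun y => r * exp ((t - r) * y)) x := by
  rw [exponentialPDF_eq]
  by_cases hx : 0 ≤ x
  · rw [if_pos hx, ENNReal.toReal_ofReal (by positivity),
      Set.indicator_of_mem (Set.mem_Ici.2 hx), mul_assoc, ← exp_add]
    ring_nf
  · simp [hx]

lemma integrable_exp_mul_expMeasure {r : ℝ} (hr : 0 < r) {t : ℝ} (ht : t < r) :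
    Integrable (fun x => exp (t * x)) (expMeasure r) := by
  rw [expMeasure_eq_withDensity, integrable_withDensity_iff (measurable_exponentialPDF r)
    (ae_of_all _ fun _ => ENNReal.ofReal_lt_top)]
  simp_rw [mul_comm (exp _), exponentialPDF_toReal_mul_exp hr]
  rw [integrable_indicator_iff measurableSet_Ici, integrableOn_Ici_iff_integrableOn_Ioi]
  exact (integrableOn_exp_mul_Ioi (sub_neg.2 ht) 0).const_mul r

lemma mgf_id_expMeasure {r : ℝ} (hr : 0 < r) {t : ℝ} (ht : t < r) :
    mgf id (expMeasure r) t = r / (r - t) := by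
  rw [mgf, expMeasure_eq_withDensity, integral_withDensity_eq_integral_toReal_smul
    (measurable_exponentialPDF r) (ae_of_all _ fun _ => ENNReal.ofReal_lt_top)]
  simp_rw [id, smul_eq_mul, exponentialPDF_toReal_mul_exp hr,
    integral_indicator measurableSet_Ici, integral_Ici_eq_integral_Ioi, integral_const_mul,
    integral_exp_mul_Ioi (sub_neg.2 ht), mul_zero, exp_zero]
  rw [← neg_sub r t, div_neg]
  ring

lemma ae_pos_expMeasure (r : ℝ) : ∀ᵐ x ∂expMeasure r, 0 < x := by
  rw [expMeasure_eq_withDensity, ae_withDensity_iff (measurable_exponentialPDF r)]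
  filter_upwards [Measure.ae_ne volume 0] with x hx0 hpdf
  exact lt_of_le_of_ne (not_lt.1 fun h => hpdf (exponentialPDF_of_neg h)) hx0.symm

lemma measureReal_abs_sub_ge_le_of_mgf_le {Ω : Type*} [MeasurableSpace Ω] {μ : Measure Ω}
    [IsFiniteMeasure μ] {X : Ω → ℝ} {m c a : ℝ} (hc : 0 < c)
    (hint : ∀ s, |s| ≤ a → Integrable (fun ω => exp (s * X ω)) μ)
    (hmgf : ∀ s, |s| ≤ a → mgf X μ s ≤ exp (s * m + c * s ^ 2))
    {t : ℝ} (ht : 0 ≤ t) (hta : t ≤ 2 * c * a) :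
    μ.real {ω | t ≤ |X ω - m|} ≤ 2 * exp (-(t ^ 2 / (4 * c))) := by
  -- `s = t / (2c)` minimises the Chernoff exponent `-s t + c s²`.
  set s := t / (2 * c) with hs
  have hs0 : 0 ≤ s := by positivity
  have hsa : |s| ≤ a := by rw [abs_of_nonneg hs0, div_le_iff₀ (by positivity)]; linarith
  have hsa' : |-s| ≤ a := by rwa [abs_neg]
  have hexponent : -s * t + c * s ^ 2 = -(t ^ 2 / (4 * c)) := by rw [hs]; field_simp; ring
  have hupper : μ.real {ω | m + t ≤ X ω} ≤ exp (-(t ^ 2 / (4 * c))) :=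
    calc _ ≤ exp (-s * (m + t)) * mgf X μ s := measure_ge_le_exp_mul_mgf _ hs0 (hint s hsa)
      _ ≤ exp (-s * (m + t)) * exp (s * m + c * s ^ 2) := by gcongr; exact hmgf s hsa
      _ = exp (-(t ^ 2 / (4 * c))) := by rw [← exp_add, ← hexponent]; ring_nf
  have hlower : μ.real {ω | X ω ≤ m - t} ≤ exp (-(t ^ 2 / (4 * c))) :=
    calc _ ≤ exp (-(-s) * (m - t)) * mgf X μ (-s) :=
          measure_le_le_exp_mul_mgf _ (neg_nonpos.2 hs0) (hint _ hsa')
      _ ≤ exp (-(-s) * (m - t)) * exp (-s * m + c * (-s) ^ 2) := by gcongr; exact hmgf _ hsa'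
      _ = exp (-(t ^ 2 / (4 * c))) := by rw [← exp_add, ← hexponent]; ring_nf
  have hsplit : {ω | t ≤ |X ω - m|} ⊆ {ω | m + t ≤ X ω} ∪ {ω | X ω ≤ m - t} :=
    fun ω (hω : t ≤ |X ω - m|) => by
      rcases le_abs'.1 hω with h | h
      exacts [Or.inr (show X ω ≤ m - t by linarith), Or.inl (show m + t ≤ X ω by linarith)]
  calc μ.real {ω | t ≤ |X ω - m|}
      ≤ μ.real {ω | m + t ≤ X ω} + μ.real {ω | X ω ≤ m - t} :=
        (measureReal_mono hsplit).trans (measureReal_union_le _ _)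
    _ ≤ 2 * exp (-(t ^ 2 / (4 * c))) := by linarith

lemma inv_one_sub_le_exp {s : ℝ} (hs : s ≤ 1 / 2) : (1 - s)⁻¹ ≤ exp (s + 2 * s ^ 2) := by
  rw [inv_le_iff_one_le_mul₀' (by linarith)]
  calc (1 : ℝ) ≤ (1 - s) * (s + 2 * s ^ 2 + 1) := by nlinarith [sq_nonneg s]
    _ ≤ (1 - s) * exp (s + 2 * s ^ 2) := by gcongr; linarith; exact add_one_le_exp _

lemma summable_exp_neg_mul_rpow {c ρ : ℝ} (hc : 0 < c) (hρ : 0 < ρ) :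
    Summable fun k : ℕ => exp (-c * (k : ℝ) ^ ρ) := by
  have hO :
      (fun k : ℕ => exp (-c * (k : ℝ) ^ ρ)) =O[atTop] fun k : ℕ => (k : ℝ) ^ (-2 : ℝ) := by
    refine ((isLittleO_exp_neg_mul_rpow_atTop hc (-2 / ρ)).isBigO.comp_tendsto
      ((tendsto_rpow_atTop hρ).comp tendsto_natCast_atTop_atTop)).congr_right fun k => ?_
    simp only [Function.comp, ← rpow_mul (Nat.cast_nonneg k), mul_div_cancel₀ _ hρ.ne']
  exact summable_of_isBigO_nat (summable_nat_rpow.2 (by norm_num)) hO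

section PartialSums

variable {Ω : Type*} [MeasurableSpace Ω] {μ : Measure Ω}

lemma integrable_exp_mul_of_map_eq_expMeasure {X : Ω → ℝ} (hX : AEMeasurable X μ) {r t : ℝ}
    (hmap : μ.map X = expMeasure r) (hr : 0 < r) (ht : t < r) :
    Integrable (fun ω => exp (t * X ω)) μ := by
  have h := integrable_exp_mul_expMeasure hr ht
  rw [← hmap, integrable_map_measure (by fun_prop) hX] at h
  exact h

lemma mgf_of_map_eq_expMeasure {X : Ω → ℝ} (hX : AEMeasurable X μ) {r t : ℝ}
    (hmap : μ.map X = expMeasure r) (hr : 0 < r) (ht : t < r) :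
    mgf X μ t = r / (r - t) := by
  rw [← mgf_id_map hX, hmap, mgf_id_expMeasure hr ht]

variable {ξ : ℕ → Ω → ℝ}

lemma mgf_sum_le_exp (hmeas : ∀ j, Measurable (ξ j)) (hindep : iIndepFun ξ μ)
    (hexp : ∀ j, μ.map (ξ j) = expMeasure 1) {s : ℝ} (hs : s ≤ 1 / 2) (k : ℕ) :
    mgf (∑ j ∈ Finset.range k, ξ j) μ s ≤ exp (s * k + 2 * k * s ^ 2) := by
  rw [hindep.mgf_sum hmeas, Finset.prod_congr rfl fun j _ =>
    mgf_of_map_eq_expMeasure (hmeas j).aemeasurable (hexp j) one_pos (by linarith),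
    Finset.prod_const, Finset.card_range, one_div,
    show s * k + 2 * k * s ^ 2 = k * (s + 2 * s ^ 2) by ring, exp_nat_mul]
  gcongr
  exacts [inv_nonneg.2 (by linarith), inv_one_sub_le_exp hs]

lemma measureReal_abs_sum_sub_ge_le [IsFiniteMeasure μ] (hmeas : ∀ j, Measurable (ξ j))
    (hindep : iIndepFun ξ μ) (hexp : ∀ j, μ.map (ξ j) = expMeasure 1) {k : ℕ} (hk : 0 < k)
    {t : ℝ} (ht : 0 ≤ t) (htk : t ≤ 2 * k) :
    μ.real {ω | t ≤ |∑ j ∈ Finset.range k, ξ j ω - k|} ≤ 2 * exp (-(t ^ 2 / (8 * k))) := by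
  have h := measureReal_abs_sub_ge_le_of_mgf_le (μ := μ) (X := ∑ j ∈ Finset.range k, ξ j)
    (m := k) (c := 2 * k) (a := 1 / 2) (by positivity)
    (fun s hs => hindep.integrable_exp_mul_sum hmeas fun j _ =>
      integrable_exp_mul_of_map_eq_expMeasure (hmeas j).aemeasurable (hexp j) one_pos
        (by linarith [le_abs_self s]))
    (fun s hs => (mgf_sum_le_exp hmeas hindep hexp (le_of_abs_le hs) k).trans_eq (by ring_nf))
    ht (by linarith)
  simpa only [Finset.sum_apply, ← mul_assoc, show (4 : ℝ) * 2 = 8 by norm_num] using h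

lemma ae_eventually_abs_sum_sub_lt_rpow [IsProbabilityMeasure μ]
    (hmeas : ∀ j, Measurable (ξ j)) (hindep : iIndepFun ξ μ)
    (hexp : ∀ j, μ.map (ξ j) = expMeasure 1) {p : ℝ} (hp : 1 / 2 < p) (hp1 : p ≤ 1) :
    ∀ᵐ ω ∂μ, ∀ᶠ k in atTop, |∑ j ∈ Finset.range k, ξ j ω - k| < (k : ℝ) ^ p := by
  set bad : ℕ → Set Ω := fun k => {ω | (k : ℝ) ^ p ≤ |∑ j ∈ Finset.range k, ξ j ω - k|}
  set f : ℕ → ℝ := fun k => 2 * exp (-(1 / 8) * (k : ℝ) ^ (2 * p - 1))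
  have hf : Summable f := (summable_exp_neg_mul_rpow (by norm_num) (by linarith)).mul_left 2
  have htail : ∀ k, μ (bad k) ≤ ENNReal.ofReal (f k) := by
    intro k
    rcases k.eq_zero_or_pos with rfl | hk
    · exact prob_le_one.trans (ENNReal.one_le_ofReal.2
        (by norm_num [f, zero_rpow (by linarith : 2 * p - 1 ≠ 0)]))
    · have hk1 : (1 : ℝ) ≤ k := Nat.one_le_cast.2 hk
      rw [← ofReal_measureReal]
      refine ENNReal.ofReal_le_ofReal ((measureReal_abs_sum_sub_ge_le hmeas hindep hexp hk
        (by positivity) ?_).trans_eq ?_)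
      · calc (k : ℝ) ^ p ≤ (k : ℝ) ^ (1 : ℝ) := rpow_le_rpow_of_exponent_le hk1 hp1
          _ ≤ 2 * k := by rw [rpow_one]; linarith
      · have hk0 : (0 : ℝ) < k := by positivity
        rw [← rpow_natCast, ← rpow_mul hk0.le]
        simp only [f]
        congr 2
        rw [rpow_sub hk0, rpow_one, mul_comm p]
        push_cast
        ring
  have hsum : ∑' k, μ (bad k) ≠ ⊤ := by
    refine ne_top_of_le_ne_top ?_ (ENNReal.tsum_le_tsum htail)
    rw [← ENNReal.ofReal_tsum_of_nonneg (fun k => by positivity) hf]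
    exact ENNReal.ofReal_ne_top
  filter_upwards [ae_eventually_notMem hsum] with ω hω
  filter_upwards [hω] with k hk
  exact not_le.1 hk

end PartialSums

lemma le_max_of_le_add_mul_rpow {p B x y : ℝ} (hp1 : p < 1) (hB : 0 ≤ B)
    (h : y ≤ x + B * y ^ p) : y ≤ max (2 * x) ((2 * B) ^ (1 - p)⁻¹) := by
  by_contra! hlt
  have hy0 : 0 < y := lt_of_le_of_lt (by positivity) (max_lt_iff.1 hlt).2
  have hyB : 2 * B < y ^ (1 - p) := by
    calc 2 * B = ((2 * B) ^ (1 - p)⁻¹) ^ (1 - p) := by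
          rw [← rpow_mul (by positivity), inv_mul_cancel₀ (by linarith), rpow_one]
      _ < y ^ (1 - p) := rpow_lt_rpow (by positivity) (max_lt_iff.1 hlt).2 (by linarith)
  have hsplit : y = y ^ (1 - p) * y ^ p := by rw [← rpow_add hy0]; simp
  have hyp : 0 < y ^ p := rpow_pos_of_pos hy0 p
  nlinarith [(max_lt_iff.1 hlt).1]

lemma exists_le_add_mul_rpow_add_one {p B : ℝ} (hp0 : 0 ≤ p) (hp1 : p < 1) (hB : 0 ≤ B) :
    ∃ C ≥ 0, ∀ x y : ℝ, 0 ≤ x → 0 ≤ y → y ≤ x + B * y ^ p → y ≤ x + C * (x ^ p + 1) := by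
  set D := (2 * B) ^ (1 - p)⁻¹
  have hD : 0 ≤ D := by positivity
  refine ⟨B * (2 + D ^ p), by positivity, fun x y hx hy h => h.trans ?_⟩
  have hmax : y ^ p ≤ 2 * x ^ p + D ^ p := by
    calc y ^ p ≤ (max (2 * x) D) ^ p :=
          rpow_le_rpow hy (le_max_of_le_add_mul_rpow hp1 hB h) hp0
      _ ≤ (2 * x) ^ p + D ^ p := by
          rcases le_total (2 * x) D with hle | hle
          · rw [max_eq_right hle]; linarith [rpow_nonneg (by positivity : 0 ≤ 2 * x) p]
          · rw [max_eq_left hle]; linarith [rpow_nonneg hD p]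
      _ ≤ 2 * x ^ p + D ^ p := by
          rw [mul_rpow zero_le_two hx]
          gcongr
          calc (2 : ℝ) ^ p ≤ 2 ^ (1 : ℝ) := rpow_le_rpow_of_exponent_le one_le_two hp1.le
            _ = 2 := rpow_one 2
  have hDx : 0 ≤ B * (D ^ p * x ^ p) := by positivity
  nlinarith [mul_le_mul_of_nonneg_left hmax hB]

noncomputable def countingFunction (g : ℕ → ℝ) (x : ℝ) : ℕ := {k : ℕ | 1 ≤ k ∧ g k ≤ x}.ncard

lemma ncard_le_of_forall_mem_le {S : Set ℕ} {y : ℝ} (hy : 0 ≤ y)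
    (hS : ∀ k ∈ S, 1 ≤ k ∧ (k : ℝ) ≤ y) : (S.ncard : ℝ) ≤ y := by
  have hsub : S ⊆ Set.Icc 1 ⌊y⌋₊ := fun k hk => ⟨(hS k hk).1, Nat.le_floor (hS k hk).2⟩
  have hcard := Set.ncard_le_ncard hsub (Set.finite_Icc _ _)
  rw [Set.ncard_Icc_nat, Nat.add_sub_cancel] at hcard
  exact (Nat.cast_le.2 hcard).trans (Nat.floor_le hy)

section Counting

variable {g : ℕ → ℝ} {p B : ℝ}

lemma sub_countingFunction_le (hp0 : 0 ≤ p) (hB : 0 ≤ B)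
    (hg : ∀ k : ℕ, 1 ≤ k → g k ≤ k + B * (k : ℝ) ^ p) {x : ℝ} (hx : 0 ≤ x)
    (hfin : {k : ℕ | 1 ≤ k ∧ g k ≤ x}.Finite) :
    x - countingFunction g x ≤ B * x ^ p + 1 := by
  set n := ⌊x - B * x ^ p⌋₊
  have hsub : Set.Icc 1 n ⊆ {k : ℕ | 1 ≤ k ∧ g k ≤ x} := by
    intro k ⟨hk1, hkn⟩
    have hk : (k : ℝ) ≤ x - B * x ^ p := (Nat.le_floor_iff' (by omega)).1 hkn
    have hkx : (k : ℝ) ^ p ≤ x ^ p :=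
      rpow_le_rpow k.cast_nonneg (by linarith [mul_nonneg hB (rpow_nonneg hx p)]) hp0
    refine ⟨hk1, ?_⟩
    nlinarith [hg k hk1]
  have hn : n ≤ countingFunction g x := by
    simpa [countingFunction, Set.ncard_Icc_nat] using Set.ncard_le_ncard hsub hfin
  have hfloor : x - B * x ^ p < n + 1 := Nat.lt_floor_add_one _
  have : (n : ℝ) ≤ countingFunction g x := by exact_mod_cast hn
  linarith

lemma exists_abs_countingFunction_sub_le (hp0 : 0 ≤ p) (hp1 : p < 1)
    (hg : ∀ k : ℕ, 1 ≤ k → |g k - k| ≤ B * (k : ℝ) ^ p) :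
    ∃ C ≥ 0, ∀ x, 0 ≤ x → |(countingFunction g x : ℝ) - x| ≤ C * (x ^ p + 1) := by
  have hB : 0 ≤ B := by simpa using (abs_nonneg _).trans (hg 1 le_rfl)
  obtain ⟨C, hC0, hC⟩ := exists_le_add_mul_rpow_add_one hp0 hp1 hB
  refine ⟨max C (B + 1), by positivity, fun x hx => ?_⟩
  have hS : ∀ k ∈ {k : ℕ | 1 ≤ k ∧ g k ≤ x}, 1 ≤ k ∧ (k : ℝ) ≤ x + C * (x ^ p + 1) :=
    fun k ⟨hk, hkx⟩ => ⟨hk, hC x k hx k.cast_nonneg (by linarith [(abs_le.1 (hg k hk)).1])⟩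
  have hupper : (countingFunction g x : ℝ) ≤ x + C * (x ^ p + 1) :=
    ncard_le_of_forall_mem_le (by positivity) hS
  have hlower := sub_countingFunction_le hp0 hB
    (fun k hk => by linarith [(abs_le.1 (hg k hk)).2]) hx
    ((Set.finite_Iic ⌊x + C * (x ^ p + 1)⌋₊).subset fun k hk => Nat.le_floor (hS k hk).2)
  have hxp := rpow_nonneg hx p
  rw [abs_le]
  constructor <;> nlinarith [le_max_left C (B + 1), le_max_right C (B + 1)]

lemma exists_rpow_mul_abs_countingFunction_sub_le (hp0 : 0 ≤ p) (hp1 : p < 1) {m : ℝ}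
    (hm : 0 < m) (hgm : ∀ k : ℕ, 1 ≤ k → m ≤ g k)
    (hg : ∀ k : ℕ, 1 ≤ k → |g k - k| ≤ B * (k : ℝ) ^ p) :
    ∃ C > 0, ∀ x > 0, x ^ (-p) * |(countingFunction g x : ℝ) - x| ≤ C := by
  obtain ⟨C, hC0, hC⟩ := exists_abs_countingFunction_sub_le hp0 hp1 hg
  refine ⟨m ^ (-p + 1) + C * (1 + m ^ (-p)), by positivity, fun x hx => ?_⟩
  rcases lt_or_ge x m with hxm | hxm
  · have hempty : countingFunction g x = 0 := by
      have hS : {k : ℕ | 1 ≤ k ∧ g k ≤ x} = ∅ :=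
        Set.eq_empty_of_forall_notMem fun k hk => by linarith [hgm k hk.1, hk.2]
      rw [countingFunction, hS, Set.ncard_empty]
    rw [hempty, Nat.cast_zero, zero_sub, abs_neg, abs_of_pos hx, ← rpow_add_one hx.ne']
    exact le_add_of_le_of_nonneg (rpow_le_rpow hx.le hxm.le (by linarith)) (by positivity)
  · calc x ^ (-p) * |(countingFunction g x : ℝ) - x| ≤ x ^ (-p) * (C * (x ^ p + 1)) := by
          gcongr; exact hC x hx.le
      _ = C * (1 + x ^ (-p)) := by
          rw [rpow_neg hx.le]; field_simp [(rpow_pos_of_pos hx p).ne']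
      _ ≤ C * (1 + m ^ (-p)) := by
          have := rpow_le_rpow_of_nonpos hm hxm (neg_nonpos.2 hp0)
          gcongr
      _ ≤ m ^ (-p + 1) + C * (1 + m ^ (-p)) := le_add_of_nonneg_left (by positivity)

end Counting

lemma exists_forall_abs_sub_le_mul_rpow_of_eventually {g : ℕ → ℝ} {p : ℝ} (hp : 0 ≤ p)
    (hg : ∀ᶠ k in atTop, |g k - k| ≤ (k : ℝ) ^ p) :
    ∃ B, ∀ k : ℕ, 1 ≤ k → |g k - k| ≤ B * (k : ℝ) ^ p := by
  obtain ⟨K, hK⟩ := eventually_atTop.1 hg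
  set B := 1 + ∑ i ∈ Finset.range K, |g i - i|
  have hB : 1 ≤ B := le_add_of_nonneg_right (Finset.sum_nonneg fun i _ => abs_nonneg _)
  refine ⟨B, fun k hk => ?_⟩
  have hkp : 1 ≤ (k : ℝ) ^ p := one_le_rpow (Nat.one_le_cast.2 hk) hp
  rcases lt_or_ge k K with hkK | hkK
  · have : |g k - k| ≤ ∑ i ∈ Finset.range K, |g i - i| :=
      Finset.single_le_sum (f := fun i => |g i - i|) (fun i _ => abs_nonneg _)
        (Finset.mem_range.2 hkK)
    nlinarith
  · nlinarith [hK k hkK]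

lemma exists_one_sub_le_measure_of_ae_exists_mem {Ω : Type*} [MeasurableSpace Ω]
    {μ : Measure Ω} [IsProbabilityMeasure μ] {E : ℕ → Set Ω} (hE : Monotone E)
    (h : ∀ᵐ ω ∂μ, ∃ n, ω ∈ E n) {ε : ENNReal} (hε : 0 < ε) : ∃ n, 1 - ε ≤ μ (E n) := by
  have hU : 1 ≤ μ (⋃ n, E n) :=
    measure_univ.symm.le.trans (measure_mono_ae (h.mono fun ω hω _ => Set.mem_iUnion.2 hω))
  have hlt : 1 - ε < μ (⋃ n, E n) :=
    (ENNReal.sub_lt_self ENNReal.one_ne_top one_ne_zero hε.ne').trans_le hU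
  obtain ⟨n, hn⟩ := ((tendsto_measure_iUnion_atTop hE).eventually (lt_mem_nhds hlt)).exists
  exact ⟨n, hn.le⟩

/-- Fluctuation bound for the counting function of a standard homogeneous Poisson process:
if `ξ₁, ξ₂, …` are i.i.d. rate-1 exponential random variables with partial sums
`Γ_k = ξ₁ + … + ξ_k`, and `0 < δ < 1/2`, then for every `ε > 0` there is `B > 0` such that
with probability at least `1 - ε`,
`sup_{x > 0} x^{-(1/2+δ)} |#{k ≥ 1 : Γ_k ≤ x} - x| ≤ B`. -/
theorem poisson_counting_fluctuation
    {Ω : Type*} [MeasurableSpace Ω] (μ : Measure Ω) [IsProbabilityMeasure μ]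
    (ξ : ℕ → Ω → ℝ) (hmeas : ∀ j, Measurable (ξ j))
    (hindep : iIndepFun ξ μ)
    (hexp : ∀ j, Measure.map (ξ j) μ = expMeasure 1)
    (δ : ℝ) (hδ : 0 < δ) (hδ' : δ < 1 / 2) (ε : ℝ) (hε : 0 < ε) :
    ∃ B > (0 : ℝ),
      1 - ENNReal.ofReal ε ≤
        μ {ω | ∀ x > (0 : ℝ),
          x ^ (-(1 / 2 + δ)) *
            |(Set.ncard {k : ℕ | 1 ≤ k ∧ ∑ j ∈ Finset.range k, ξ j ω ≤ x} : ℝ) - x| ≤ B} := by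
  set p := 1 / 2 + δ with hp
  have hp_half : 1 / 2 < p := by linarith
  have hp1 : p < 1 := by linarith
  set E : ℕ → Set Ω := fun n => {ω | ∀ x > (0 : ℝ),
    x ^ (-p) * |(countingFunction (fun k => ∑ j ∈ Finset.range k, ξ j ω) x : ℝ) - x| ≤ n}
  have hE : Monotone E := fun m n hmn ω hω x hx => (hω x hx).trans (Nat.cast_le.2 hmn)
  have hpos : ∀ᵐ ω ∂μ, ∀ j, 0 < ξ j ω := ae_all_iff.2 fun j =>
    ae_of_ae_map (hmeas j).aemeasurable ((hexp j).symm ▸ ae_pos_expMeasure 1)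
  have hbdd : ∀ᵐ ω ∂μ, ∃ n, ω ∈ E n := by
    filter_upwards [ae_eventually_abs_sum_sub_lt_rpow hmeas hindep hexp hp_half hp1.le,
      hpos] with ω hω hξ
    obtain ⟨B, hB⟩ :=
      exists_forall_abs_sub_le_mul_rpow_of_eventually (by linarith) (hω.mono fun _ => le_of_lt)
    have hΓ : ∀ k : ℕ, 1 ≤ k → ξ 0 ω ≤ ∑ j ∈ Finset.range k, ξ j ω := fun k hk =>
      Finset.single_le_sum (fun j _ => (hξ j).le) (Finset.mem_range.2 hk)
    obtain ⟨C, -, hC⟩ := exists_rpow_mul_abs_countingFunction_sub_le (by linarith) hp1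
      (hξ 0) hΓ hB
    exact ⟨⌈C⌉₊, fun x hx => (hC x hx).trans (Nat.le_ceil C)⟩
  obtain ⟨n, hn⟩ :=
    exists_one_sub_le_measure_of_ae_exists_mem hE hbdd (ENNReal.ofReal_pos.2 hε)
  refine ⟨n + 1, by positivity, hn.trans (measure_mono fun ω hω x hx => ?_)⟩
  exact (hω x hx).trans (by linarith)
end

section
/- For every r ≥ 1 and n ≥ 2r: (i) v_n(P) = Σ_j p_j^{2r}(1−p_j)^n ≤ E_P(M_{n,2r})/C(n,2r) ≤ E_P(C_{n,r})/C(n,2r); and (ii) 0 ≤ E_P(θ̂_r^{GT}(X_n)) − E_P(θ_r(P;X_n)) ≤ r·E_P(C_{n,r})/C(n,r+1), where C(n,k) denotes the binomial coefficient. -/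
open MeasureTheory ProbabilityTheory Real Filter

noncomputable section

/-- `M_{n,r}`: the number of distinct symbols appearing exactly `r` times in the sample. -/
def Mcount {n : ℕ} (ω : Fin n → ℕ) (r : ℕ) : ℝ :=
  ∑' j, if freq ω j = r then 1 else 0

/-- `C_{n,r}`: the number of distinct symbols appearing at least `r` times in the sample. -/
def Ccount {n : ℕ} (ω : Fin n → ℕ) (r : ℕ) : ℝ :=
  ∑' j, if r ≤ freq ω j then 1 else 0

/-- The Good–Turing-type estimator `θ̂_r^{GT}(X_n) = M_{n,r} / (n choose r)`. -/
def gtEst {n : ℕ} (ω : Fin n → ℕ) (r : ℕ) : ℝ := Mcount ω r / (n.choose r)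

/-- `v_n(P) = Σ_j p_j^{2r} (1 - p_j)^n`. -/
def vnP (P : PMF ℕ) (r n : ℕ) : ℝ :=
  ∑' j, pReal P j ^ (2 * r) * (1 - pReal P j) ^ n

/-!
Under the i.i.d. law the count `Y_{n,j}` is binomial with parameters `n` and `p_j`, so by
linearity `E M_{n,k} = C(n,k) Σ_j p_j^k (1-p_j)^(n-k)`, `E θ_r = Σ_j p_j^r (1-p_j)^n` and
`E θ̂_r^{GT} = Σ_j p_j^r (1-p_j)^(n-r)`. The lower bounds then follow from
`(1-p)^n ≤ (1-p)^(n-k)`, and `E M_{n,k} ≤ E C_{n,r}` for `r ≤ k` from the inclusion of events.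
For the upper bound in (ii), Bernoulli's inequality `1 - (1-p)^r ≤ r p` bounds the `j`-th term of
the bias by `r p_j^(r+1) (1-p_j)^(n-r-1) = r P(Y_{n,j} = r+1) / C(n,r+1)`.
-/

open scoped ENNReal

theorem pow_mul_one_sub_pow_sub_le {p : ℝ} (hp0 : 0 ≤ p) (hp1 : p ≤ 1) {r n : ℕ} (hrn : r < n) :
    p ^ r * (1 - p) ^ (n - r) - p ^ r * (1 - p) ^ n ≤
      r * (p ^ (r + 1) * (1 - p) ^ (n - (r + 1))) := by
  have hq0 : 0 ≤ 1 - p := by linarith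
  have hsplit : (1 - p) ^ n = (1 - p) ^ (n - r) * (1 - p) ^ r := by
    rw [← pow_add, Nat.sub_add_cancel hrn.le]
  have hbernoulli : 1 - (1 - p) ^ r ≤ r * p := by
    have := one_add_mul_le_pow (a := -p) (by linarith) r
    rw [← sub_eq_add_neg] at this
    linarith
  have hmono : (1 - p) ^ (n - r) ≤ (1 - p) ^ (n - (r + 1)) :=
    pow_le_pow_of_le_one hq0 (by linarith) (by omega)
  calc p ^ r * (1 - p) ^ (n - r) - p ^ r * (1 - p) ^ n
      = p ^ r * (1 - p) ^ (n - r) * (1 - (1 - p) ^ r) := by rw [hsplit]; ring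
    _ ≤ p ^ r * (1 - p) ^ (n - (r + 1)) * (r * p) := by
        have : 0 ≤ 1 - (1 - p) ^ r := sub_nonneg.mpr (pow_le_one₀ hq0 (by linarith))
        gcongr
    _ = r * (p ^ (r + 1) * (1 - p) ^ (n - (r + 1))) := by ring

section IndicatorSeries

variable {Ω ι : Type*} [MeasurableSpace Ω] [Countable ι] {μ : Measure Ω}

theorem integral_tsum_indicator_const {A : ι → Set Ω} (hA : ∀ j, MeasurableSet (A j))
    {c : ι → ℝ} (h : ∑' j, ‖c j‖ₑ * μ (A j) ≠ ∞) :
    ∫ ω, ∑' j, (A j).indicator (fun _ => c j) ω ∂μ = ∑' j, μ.real (A j) * c j := by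
  rw [integral_tsum (fun j => (measurable_const.indicator (hA j)).aestronglyMeasurable)]
  · simp [integral_indicator_const _ (hA _)]
  · simpa [enorm_indicator_eq_indicator_enorm, lintegral_indicator_const (hA _), mul_comm]
      using h

end IndicatorSeries

section Sample

variable (P : PMF ℕ) {n : ℕ}

theorem pReal_nonneg (j : ℕ) : 0 ≤ pReal P j := ENNReal.toReal_nonneg

theorem pReal_le_one (j : ℕ) : pReal P j ≤ 1 :=
  ENNReal.toReal_le_of_le_ofReal zero_le_one (by simpa using P.coe_le_one j)

theorem summable_pReal : Summable (pReal P) :=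
  ENNReal.summable_toReal (P.tsum_coe ▸ ENNReal.one_ne_top)

theorem summable_pReal_pow_mul {k : ℕ} (hk : k ≠ 0) (m : ℕ) :
    Summable fun j => pReal P j ^ k * (1 - pReal P j) ^ m := by
  have h0 := pReal_nonneg P
  have h1 := pReal_le_one P
  refine (summable_pReal P).of_nonneg_of_le (fun j => ?_) fun j => ?_
  · exact mul_nonneg (pow_nonneg (h0 j) k) (pow_nonneg (sub_nonneg.mpr (h1 j)) m)
  · calc pReal P j ^ k * (1 - pReal P j) ^ m ≤ pReal P j ^ k :=
          mul_le_of_le_one_right (pow_nonneg (h0 j) k)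
            (pow_le_one₀ (by linarith [h1 j]) (by linarith [h0 j]))
      _ ≤ pReal P j := pow_le_of_le_one (h0 j) (h1 j) hk

theorem tsum_pReal_pow_mul_le_of_le {k : ℕ} (hk : k ≠ 0) {m n : ℕ} (hmn : m ≤ n) :
    ∑' j, pReal P j ^ k * (1 - pReal P j) ^ n ≤ ∑' j, pReal P j ^ k * (1 - pReal P j) ^ m :=
  (summable_pReal_pow_mul P hk n).tsum_le_tsum (fun j =>
    mul_le_mul_of_nonneg_left
      (pow_le_pow_of_le_one (sub_nonneg.mpr (pReal_le_one P j))
        (sub_le_self _ (pReal_nonneg P j)) hmn)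
      (pow_nonneg (pReal_nonneg P j) k))
    (summable_pReal_pow_mul P hk m)

instance : IsProbabilityMeasure (sampleMeasure P n) := by
  unfold sampleMeasure; infer_instance

theorem sampleMeasure_coord_eq (i : Fin n) (j : ℕ) :
    sampleMeasure P n {ω | ω i = j} = P j := by
  rw [← PMF.toMeasure_apply_singleton P j (measurableSet_singleton j)]
  exact (measurePreserving_eval (fun _ : Fin n => P.toMeasure) i).measure_preimage
    (measurableSet_singleton j).nullMeasurableSet

theorem sampleMeasure_positions_eq (j : ℕ) (s : Finset (Fin n)) :
    sampleMeasure P n {ω | Finset.univ.filter (ω · = j) = s} =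
      P j ^ s.card * (1 - P j) ^ (n - s.card) := by
  have hpi : {ω : Fin n → ℕ | Finset.univ.filter (ω · = j) = s}
      = Set.univ.pi fun i => if i ∈ s then {j} else {j}ᶜ := by
    ext ω
    simp only [Finset.ext_iff, Set.mem_ofPred_eq, Finset.mem_filter, Finset.mem_univ, true_and,
      Set.mem_pi, Set.mem_univ, forall_const]
    refine forall_congr' fun i => ?_
    split_ifs with hi <;> simp [hi]
  rw [hpi, sampleMeasure, Measure.pi_pi]
  simp [apply_ite, prob_compl_eq_one_sub, PMF.toMeasure_apply_singleton, Finset.prod_ite,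
    Finset.filter_not, ← Finset.compl_eq_univ_sdiff, Finset.card_compl]

theorem sampleMeasure_freq_eq (j k : ℕ) :
    sampleMeasure P n {ω | freq ω j = k} = n.choose k * (P j ^ k * (1 - P j) ^ (n - k)) := by
  have hfib : {ω : Fin n → ℕ | freq ω j = k} =
      (fun ω => Finset.univ.filter (ω · = j)) ⁻¹'
        ↑(Finset.powersetCard k (Finset.univ : Finset (Fin n))) := by
    ext ω; simp [freq]
  rw [hfib, ← sum_measure_preimage_singleton _ fun _ _ => .of_discrete]
  calc _ = ∑ s ∈ Finset.powersetCard k Finset.univ, P j ^ k * (1 - P j) ^ (n - k) :=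
        Finset.sum_congr rfl fun s hs => by
          rw [← Finset.mem_powersetCard_univ.mp hs]
          exact sampleMeasure_positions_eq P j s
    _ = _ := by simp

theorem sampleMeasure_freq_ne_zero_le (j : ℕ) :
    sampleMeasure P n {ω | freq ω j ≠ 0} ≤ n * P j := by
  calc sampleMeasure P n {ω | freq ω j ≠ 0}
      ≤ sampleMeasure P n (⋃ i, {ω | ω i = j}) :=
        measure_mono fun ω hω => by
          simpa [freq, Finset.card_eq_zero, Finset.filter_eq_empty_iff] using hω
    _ ≤ ∑ i, sampleMeasure P n {ω | ω i = j} := measure_iUnion_fintype_le _ _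
    _ = n * P j := by simp [sampleMeasure_coord_eq]

theorem tsum_sampleMeasure_ne_top {A : ℕ → Set (Fin n → ℕ)}
    (hA : ∀ j, A j ⊆ {ω | freq ω j ≠ 0}) : ∑' j, sampleMeasure P n (A j) ≠ ∞ := by
  refine ne_top_of_le_ne_top ?_ (ENNReal.tsum_le_tsum fun j =>
    (measure_mono (hA j)).trans (sampleMeasure_freq_ne_zero_le P j))
  simp [ENNReal.tsum_mul_left]

/-- `¬ S 0` restricts the count to symbols present in the sample; there are at most `n` of them. -/
theorem integral_tsum_ite_freq (S : ℕ → Prop) [DecidablePred S] (hS : ¬ S 0) :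
    ∫ ω, (∑' j, if S (freq ω j) then (1 : ℝ) else 0) ∂sampleMeasure P n =
      ∑' j, (sampleMeasure P n).real {ω | S (freq ω j)} := by
  have h := integral_tsum_indicator_const (μ := sampleMeasure P n)
    (A := fun j => {ω | S (freq ω j)}) (c := fun _ => 1) (fun _ => .of_discrete) ?_
  · simpa [Set.indicator_apply] using h
  · simp only [enorm_one, one_mul]
    exact tsum_sampleMeasure_ne_top P fun j ω (hω : S _) h0 => hS (h0 ▸ hω)

theorem measureReal_freq_eq (j k : ℕ) :
    (sampleMeasure P n).real {ω | freq ω j = k} =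
      n.choose k * (pReal P j ^ k * (1 - pReal P j) ^ (n - k)) := by
  simp [measureReal_def, sampleMeasure_freq_eq, pReal,
    ENNReal.toReal_sub_of_le (P.coe_le_one j) ENNReal.one_ne_top]

theorem integral_Mcount {k : ℕ} (hk : k ≠ 0) :
    ∫ ω, Mcount ω k ∂sampleMeasure P n = ∑' j, (sampleMeasure P n).real {ω | freq ω j = k} :=
  integral_tsum_ite_freq P (· = k) hk.symm

theorem integral_Ccount {r : ℕ} (hr : r ≠ 0) :
    ∫ ω, Ccount ω r ∂sampleMeasure P n = ∑' j, (sampleMeasure P n).real {ω | r ≤ freq ω j} :=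
  integral_tsum_ite_freq P (r ≤ ·) (by omega)

theorem integral_Mcount_le_integral_Ccount {r k : ℕ} (hr : r ≠ 0) (hrk : r ≤ k) :
    ∫ ω, Mcount ω k ∂sampleMeasure P n ≤ ∫ ω, Ccount ω r ∂sampleMeasure P n := by
  rw [integral_Mcount P (by omega), integral_Ccount P hr]
  refine Summable.tsum_le_tsum
    (fun j => measureReal_mono fun ω (h : freq ω j = k) => show r ≤ freq ω j by omega)
    (ENNReal.summable_toReal (tsum_sampleMeasure_ne_top P fun j ω (h : _ = k) =>
      show freq ω j ≠ 0 by omega))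
    (ENNReal.summable_toReal (tsum_sampleMeasure_ne_top P fun j ω (h : r ≤ _) =>
      show freq ω j ≠ 0 by omega))

theorem integral_Mcount_eq_choose_mul {k : ℕ} (hk : k ≠ 0) :
    ∫ ω, Mcount ω k ∂sampleMeasure P n =
      n.choose k * ∑' j, pReal P j ^ k * (1 - pReal P j) ^ (n - k) := by
  rw [integral_Mcount P hk, ← tsum_mul_left]
  exact tsum_congr fun j => measureReal_freq_eq P j k

theorem integral_gtEst {r : ℕ} (hr : r ≠ 0) (hrn : r ≤ n) :
    ∫ ω, gtEst ω r ∂sampleMeasure P n = ∑' j, pReal P j ^ r * (1 - pReal P j) ^ (n - r) := by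
  have hc : (n.choose r : ℝ) ≠ 0 := by exact_mod_cast (Nat.choose_pos hrn).ne'
  simp only [gtEst]
  rw [integral_div, integral_Mcount_eq_choose_mul P hr, mul_div_cancel_left₀ _ hc]

theorem integral_missingMass {r : ℕ} (hr : r ≠ 0) :
    ∫ ω, missingMass (pReal P) r ω ∂sampleMeasure P n =
      ∑' j, pReal P j ^ r * (1 - pReal P j) ^ n := by
  have hindicator : ∀ ω : Fin n → ℕ, missingMass (pReal P) r ω =
      ∑' j, {ω | freq ω j = 0}.indicator (fun _ => pReal P j ^ r) ω := by
    intro ω; simp [missingMass, Set.indicator_apply]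
  have hfin : ∑' j, ‖pReal P j ^ r‖ₑ * sampleMeasure P n {ω | freq ω j = 0} ≠ ∞ := by
    refine ne_top_of_le_ne_top (P.tsum_coe ▸ ENNReal.one_ne_top)
      (ENNReal.tsum_le_tsum fun j => ?_)
    calc ‖pReal P j ^ r‖ₑ * sampleMeasure P n {ω | freq ω j = 0} ≤ P j ^ r * 1 := by
          rw [enorm_pow, pReal, enorm_toReal (P.apply_ne_top j)]
          gcongr
          exact prob_le_one
      _ ≤ P j := by rw [mul_one]; exact pow_le_of_le_one zero_le (P.coe_le_one j) hr
  simp_rw [hindicator]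
  rw [integral_tsum_indicator_const (fun _ => .of_discrete) hfin]
  simp [measureReal_freq_eq, mul_comm]

theorem vnP_le_integral_Mcount_div {r : ℕ} (hr : r ≠ 0) (hn : 2 * r ≤ n) :
    vnP P r n ≤ (∫ ω, Mcount ω (2 * r) ∂sampleMeasure P n) / n.choose (2 * r) := by
  have hc : (n.choose (2 * r) : ℝ) ≠ 0 := by exact_mod_cast (Nat.choose_pos hn).ne'
  rw [integral_Mcount_eq_choose_mul P (by omega), mul_div_cancel_left₀ _ hc]
  exact tsum_pReal_pow_mul_le_of_le P (by omega) (Nat.sub_le n _)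

theorem integral_missingMass_le_integral_gtEst {r : ℕ} (hr : r ≠ 0) (hrn : r ≤ n) :
    ∫ ω, missingMass (pReal P) r ω ∂sampleMeasure P n ≤ ∫ ω, gtEst ω r ∂sampleMeasure P n := by
  rw [integral_missingMass P hr, integral_gtEst P hr hrn]
  exact tsum_pReal_pow_mul_le_of_le P hr (Nat.sub_le n r)

theorem integral_gtEst_sub_integral_missingMass_le {r : ℕ} (hr : r ≠ 0) (hrn : r < n) :
    ∫ ω, gtEst ω r ∂sampleMeasure P n - ∫ ω, missingMass (pReal P) r ω ∂sampleMeasure P n ≤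
      r * (∫ ω, Mcount ω (r + 1) ∂sampleMeasure P n) / n.choose (r + 1) := by
  have hc : (n.choose (r + 1) : ℝ) ≠ 0 := by exact_mod_cast (Nat.choose_pos hrn).ne'
  rw [integral_gtEst P hr hrn.le, integral_missingMass P hr,
    integral_Mcount_eq_choose_mul P (k := r + 1) (by omega), mul_left_comm,
    mul_div_cancel_left₀ _ hc, ← Summable.tsum_sub (summable_pReal_pow_mul P hr _)
      (summable_pReal_pow_mul P hr _), ← tsum_mul_left]
  exact Summable.tsum_le_tsum
    (fun j => pow_mul_one_sub_pow_sub_le (pReal_nonneg P j) (pReal_le_one P j) hrn)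
    ((summable_pReal_pow_mul P hr _).sub (summable_pReal_pow_mul P hr _))
    ((summable_pReal_pow_mul P (k := r + 1) (by omega) _).mul_left _)

end Sample

/-- Moment comparisons: (i) `v_n(P) ≤ E_P(M_{n,2r})/C(n,2r) ≤ E_P(C_{n,r})/C(n,2r)`;
(ii) `0 ≤ E_P(θ̂_r^{GT}) − E_P(θ_r) ≤ r E_P(C_{n,r})/C(n,r+1)`. -/
theorem moment_comparisons (P : PMF ℕ) (r n : ℕ) (hr : 1 ≤ r) (hn : 2 * r ≤ n) :
    (vnP P r n ≤ (∫ ω, Mcount ω (2 * r) ∂ sampleMeasure P n) / (n.choose (2 * r)) ∧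
      (∫ ω, Mcount ω (2 * r) ∂ sampleMeasure P n) / (n.choose (2 * r)) ≤
        (∫ ω, Ccount ω r ∂ sampleMeasure P n) / (n.choose (2 * r))) ∧
    (0 ≤ (∫ ω, gtEst ω r ∂ sampleMeasure P n) -
        (∫ ω, missingMass (pReal P) r ω ∂ sampleMeasure P n) ∧
      (∫ ω, gtEst ω r ∂ sampleMeasure P n) -
          (∫ ω, missingMass (pReal P) r ω ∂ sampleMeasure P n) ≤
        r * (∫ ω, Ccount ω r ∂ sampleMeasure P n) / (n.choose (r + 1))) := by
  have hr0 : r ≠ 0 := by omega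
  refine ⟨⟨vnP_le_integral_Mcount_div P hr0 hn, ?_⟩,
    sub_nonneg.mpr (integral_missingMass_le_integral_gtEst P hr0 (by omega)), ?_⟩
  · exact div_le_div_of_nonneg_right
      (integral_Mcount_le_integral_Ccount P (k := 2 * r) hr0 (by omega)) (Nat.cast_nonneg _)
  · refine (integral_gtEst_sub_integral_missingMass_le P hr0 (by omega)).trans ?_
    exact div_le_div_of_nonneg_right (mul_le_mul_of_nonneg_left
      (integral_Mcount_le_integral_Ccount P (k := r + 1) hr0 (by omega)) (Nat.cast_nonneg r))
      (Nat.cast_nonneg _)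

end
end
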